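/- arXiv:2303.05682 — 5 statements merged into one kernel-verified Lean document; each statement's English description precedes it below -/
import Mathlib

section
/- Let T_n be the triangular graph: the simple graph whose vertex set is 𝕀, with two distinct vertices α = (i,j) and β = (k,l) adjacent if and only if {i,j} ∩ {k,l} ≠ ∅. Then H = 4·I_L + A(T_n), where A(T_n) is the adjacency matrix of T_n and I_L is the L×L identity matrix. -/
open Matrix

/-- The index set 𝕀 = {(i,j) : 1 ≤ i < j ≤ n}, realized as ordered pairs of `Fin n`. -/
abbrev Idx (n : ℕ) := {p : Fin n × Fin n // p.1 < p.2}

/-- The basis matrix `w_{i,j} = e_{i,i} + e_{j,j} - e_{i,j} - e_{j,i}`. -/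
noncomputable def w {n : ℕ} (α : Idx n) : Matrix (Fin n) (Fin n) ℝ :=
  single α.1.1 α.1.1 1 + single α.1.2 α.1.2 1
    - single α.1.1 α.1.2 1 - single α.1.2 α.1.1 1

/-- The inner product matrix `H` with entries `H_{α,β} = ⟨w_α, w_β⟩ = trace(w_αᵀ w_β)`. -/
noncomputable def H (n : ℕ) : Matrix (Idx n) (Idx n) ℝ :=
  Matrix.of fun α β => ((w α)ᵀ * w β).trace

/-- The triangular graph `T_n`: vertices are the pairs in 𝕀, and two distinct vertices
`α = (i,j)` and `β = (k,l)` are adjacent iff `{i,j} ∩ {k,l} ≠ ∅`. -/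
def triGraph (n : ℕ) : SimpleGraph (Idx n) where
  Adj a b := a ≠ b ∧ (({a.1.1, a.1.2} : Finset (Fin n)) ∩ {b.1.1, b.1.2}).Nonempty
  symm := ⟨fun a b h => ⟨h.1.symm, by rw [Finset.inter_comm]; exact h.2⟩⟩
  loopless := ⟨fun a h => h.1 rfl⟩

instance (n : ℕ) : DecidableRel (triGraph n).Adj := fun a b =>
  decidable_of_iff
    (a ≠ b ∧ (({a.1.1, a.1.2} : Finset (Fin n)) ∩ {b.1.1, b.1.2}).Nonempty) Iff.rfl


/-! Writing `v_{ij} = e_i - e_j`, we have `w_{ij} = v_{ij} v_{ij}ᵀ`, so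
`⟨w_α, w_β⟩ = (v_α ⬝ v_β)²`. The dot product is `2` when `α = β`, `±1` when the pairs share
exactly one index and `0` when they are disjoint. -/

noncomputable def edgeVec {n : ℕ} (α : Idx n) : Fin n → ℝ :=
  Pi.single α.1.1 1 - Pi.single α.1.2 1

theorem w_eq_vecMulVec_edgeVec {n : ℕ} (α : Idx n) :
    w α = vecMulVec (edgeVec α) (edgeVec α) := by
  simp only [w, edgeVec, sub_vecMulVec, vecMulVec_sub, ← single_eq_single_vecMulVec_single]
  abel

theorem trace_transpose_vecMulVec_mul_vecMulVec {m R : Type*} [Fintype m] [CommSemiring R]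
    (a b c d : m → R) :
    ((vecMulVec a b)ᵀ * vecMulVec c d).trace = (a ⬝ᵥ c) * (b ⬝ᵥ d) := by
  rw [transpose_vecMulVec, vecMulVec_mul_vecMulVec, trace_vecMulVec, dotProduct_smul, smul_eq_mul]

theorem H_apply {n : ℕ} (α β : Idx n) : H n α β = (edgeVec α ⬝ᵥ edgeVec β) ^ 2 := by
  rw [H, of_apply, w_eq_vecMulVec_edgeVec, w_eq_vecMulVec_edgeVec,
    trace_transpose_vecMulVec_mul_vecMulVec, sq]

theorem edgeVec_dotProduct {n : ℕ} (α β : Idx n) :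
    edgeVec α ⬝ᵥ edgeVec β =
      ((if α.1.1 = β.1.1 then 1 else 0) - (if α.1.1 = β.1.2 then 1 else 0)
        - (if α.1.2 = β.1.1 then 1 else 0) + (if α.1.2 = β.1.2 then 1 else 0) : ℝ) := by
  simp only [edgeVec, sub_dotProduct, dotProduct_sub, single_dotProduct, Pi.single_apply, one_mul]
  ring

theorem triGraph_adj_iff {n : ℕ} {α β : Idx n} :
    (triGraph n).Adj α β ↔ α ≠ β ∧
      (α.1.1 = β.1.1 ∨ α.1.1 = β.1.2 ∨ α.1.2 = β.1.1 ∨ α.1.2 = β.1.2) := by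
  simp only [triGraph, Finset.Nonempty, Finset.mem_inter, Finset.mem_insert, Finset.mem_singleton,
    or_and_right, and_or_left, exists_or, exists_eq_left]
  tauto

theorem stmt1_general {n : ℕ} :
    H n = (4 : ℝ) • (1 : Matrix (Idx n) (Idx n) ℝ) + (triGraph n).adjMatrix ℝ := by
  ext ⟨⟨i, j⟩, hij⟩ ⟨⟨k, l⟩, hkl⟩
  rw [H_apply, edgeVec_dotProduct, Matrix.add_apply, Matrix.smul_apply, one_apply,
    SimpleGraph.adjMatrix_apply]
  simp only [triGraph_adj_iff, ne_eq, Subtype.mk.injEq, Prod.mk.injEq, Fin.ext_iff,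
    Fin.lt_def] at hij hkl ⊢
  -- `i < j` and `k < l` exclude the crossed coincidence `i = l ∧ j = k`.
  split_ifs <;> first | omega | norm_num

theorem stmt1 {n : ℕ} (hn : 2 ≤ n) :
    H n = (4 : ℝ) • (1 : Matrix (Idx n) (Idx n) ℝ) + (triGraph n).adjMatrix ℝ :=
  stmt1_general
end

section
/- For n ≥ 3 and any (i,j) ∈ 𝕀, the characteristic polynomial of v_{i,j} is x^{n−2} · (x − 1/2) · (x − (1/n − 1/2)); in particular, the nonzero eigenvalues of v_{i,j} are exactly 1/2 and 1/n − 1/2, each with multiplicity 1, and 0 is an eigenvalue with multiplicity n − 2. -/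
open Matrix Polynomial

/-- The centering matrix `J = I - (1/n) 𝟙𝟙ᵀ`. -/
noncomputable def Jmat (n : ℕ) : Matrix (Fin n) (Fin n) ℝ :=
  1 - (n : ℝ)⁻¹ • Matrix.of (fun _ _ => (1 : ℝ))

/-- The `i`-th column of the centering matrix, i.e. `J eᵢ`. -/
noncomputable def Jcol (n : ℕ) (i : Fin n) : Fin n → ℝ := fun x => Jmat n x i

/-- The dual basis matrix `v_{i,j} = -(1/2)(a bᵀ + b aᵀ)` with `a = J eᵢ`, `b = J eⱼ`. -/
noncomputable def v {n : ℕ} (α : Idx n) : Matrix (Fin n) (Fin n) ℝ :=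
  (-(1 / 2) : ℝ) • (vecMulVec (Jcol n α.1.1) (Jcol n α.1.2)
    + vecMulVec (Jcol n α.1.2) (Jcol n α.1.1))

/-- Weinstein–Aronszajn identity for characteristic polynomials. -/
lemma charpoly_AB_BA {m n : ℕ} (A : Matrix (Fin n) (Fin m) ℝ) (B : Matrix (Fin m) (Fin n) ℝ) :
    X ^ m * (A * B).charpoly = X ^ n * (B * A).charpoly := by
  set K := FractionRing (Polynomial ℝ)
  set φ := algebraMap (Polynomial ℝ) K with hφdef
  have hφ : Function.Injective φ := IsFractionRing.injective _ _
  apply hφ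
  set g : ℝ →+* K := φ.comp (C : ℝ →+* Polynomial ℝ) with hg
  set x : K := φ X with hxdef
  have hx : x ≠ 0 := by
    intro h
    exact Polynomial.X_ne_zero (hφ (by simpa using h))
  have hchar : ∀ {k : ℕ} (M : Matrix (Fin k) (Fin k) ℝ),
      φ M.charpoly = Matrix.det (x • (1 : Matrix (Fin k) (Fin k) K) - M.map g) := by
    intro k M
    rw [Matrix.charpoly, RingHom.map_det]
    congr 1
    ext i j
    by_cases h : i = j
    · subst h
      simp [RingHom.mapMatrix_apply, charmatrix_apply_eq, Matrix.sub_apply,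
        Matrix.smul_apply, Matrix.one_apply_eq, Matrix.map_apply, hg, smul_eq_mul, mul_one, hxdef]
    · simp [RingHom.mapMatrix_apply, charmatrix_apply_ne _ _ _ h, Matrix.sub_apply,
        Matrix.smul_apply, Matrix.one_apply_ne h, Matrix.map_apply, hg]
  have factor : ∀ {k : ℕ} (M : Matrix (Fin k) (Fin k) K),
      x • (1 : Matrix (Fin k) (Fin k) K) - M = x • (1 - x⁻¹ • M) := by
    intro k M
    rw [smul_sub, smul_smul, mul_inv_cancel₀ hx, one_smul]
  have hAB : (A * B).map g = A.map g * B.map g := Matrix.map_mul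
  have hBA : (B * A).map g = B.map g * A.map g := Matrix.map_mul
  have hdet : Matrix.det (1 - x⁻¹ • (A.map g * B.map g))
      = Matrix.det (1 - x⁻¹ • (B.map g * A.map g)) := by
    rw [← Matrix.smul_mul, Matrix.det_one_sub_mul_comm, Matrix.mul_smul]
  rw [_root_.map_mul, _root_.map_mul, map_pow, map_pow, hchar, hchar, hAB, hBA, factor, factor,
    Matrix.det_smul, Matrix.det_smul, hdet]
  simp only [Fintype.card_fin, ← hxdef]
  ring

lemma Jcol_apply (n : ℕ) (i x : Fin n) :
    Jcol n i x = (if x = i then (1:ℝ) else 0) - (n : ℝ)⁻¹ := by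
  simp [Jcol, Jmat, Matrix.sub_apply, Matrix.one_apply, Matrix.smul_apply]

lemma dotJ {n : ℕ} (i j : Fin n) :
    ∑ x, Jcol n i x * Jcol n j x
      = (if i = j then (1:ℝ) else 0) - (n : ℝ)⁻¹ := by
  have hn : (0:ℕ) < n := i.pos
  have hn' : (n : ℝ) ≠ 0 := Nat.cast_ne_zero.mpr hn.ne'
  have step : ∀ x : Fin n, Jcol n i x * Jcol n j x =
      (if x = i then (1:ℝ) else 0) * (if x = j then (1:ℝ) else 0)
      - (n : ℝ)⁻¹ * (if x = i then (1:ℝ) else 0)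
      - (n : ℝ)⁻¹ * (if x = j then (1:ℝ) else 0)
      + (n : ℝ)⁻¹ * (n : ℝ)⁻¹ := by
    intro x; rw [Jcol_apply, Jcol_apply]; ring
  rw [Finset.sum_congr rfl fun x _ => step x]
  simp only [Finset.sum_add_distrib, Finset.sum_sub_distrib, ← Finset.mul_sum,
    Finset.sum_const, Finset.card_univ, Fintype.card_fin, nsmul_eq_mul]
  rw [Finset.sum_ite_eq' Finset.univ i (fun _ => (1:ℝ)),
    Finset.sum_ite_eq' Finset.univ j (fun _ => (1:ℝ))]
  have : ∑ x : Fin n, (if x = i then (1:ℝ) else 0) * (if x = j then (1:ℝ) else 0)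
      = if i = j then (1:ℝ) else 0 := by
    simp only [ite_mul, one_mul, zero_mul]
    rw [Finset.sum_ite_eq' Finset.univ i]
    simp
  rw [this]
  simp only [Finset.mem_univ, if_true, mul_one]
  field_simp
  ring

lemma quad_eq (a b c d : ℝ) (h1 : a + b = c + d) (h2 : a * b = c * d) :
    (X - C a) * (X - C b) = (X - C c) * (X - C d) := by
  have expand : ∀ p q : ℝ, (X - C p) * (X - C q)
      = X ^ 2 - C (p + q) * X + C (p * q) := by
    intro p q
    simp only [C_add, C_mul]
    ring
  rw [expand, expand, h1, h2]

/-- For `n ≥ 3`, the characteristic polynomial of `v_{i,j}` is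
`x^(n-2) (x - 1/2) (x - (1/n - 1/2))`: the nonzero eigenvalues are exactly `1/2` and
`1/n - 1/2`, each with multiplicity 1, and `0` is an eigenvalue with multiplicity `n-2`. -/
theorem stmt9 {n : ℕ} (hn : 3 ≤ n) (α : Idx n) :
    (v α).charpoly =
      X ^ (n - 2) * (X - C (1 / 2 : ℝ)) * (X - C ((n : ℝ)⁻¹ - 1 / 2)) := by
  obtain ⟨⟨i, j⟩, hij⟩ := α
  have hne : i ≠ j := ne_of_lt hij
  set a : Fin n → ℝ := Jcol n i with ha
  set b : Fin n → ℝ := Jcol n j with hb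
  set A : Matrix (Fin n) (Fin 2) ℝ := Matrix.of (fun x k => ![a, b] k x) with hA
  set B : Matrix (Fin 2) (Fin n) ℝ :=
    Matrix.of (fun k x => (-(1/2) : ℝ) * ![b, a] k x) with hB
  have hv : v ⟨(i, j), hij⟩ = A * B := by
    ext x y
    rw [Matrix.mul_apply, Fin.sum_univ_two]
    simp only [v, Matrix.smul_apply, Matrix.add_apply, vecMulVec_apply,
      hA, hB, Matrix.of_apply, Matrix.cons_val_zero, Matrix.cons_val_one, Matrix.head_cons,
      ← ha, ← hb, smul_eq_mul]
    ring
  set t : ℝ := (n : ℝ)⁻¹ with ht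
  have entry : ∀ (u w : Fin n → ℝ) (c : ℝ),
      ∑ x, (-(1/2 : ℝ) * u x) * w x = c → ∑ x, (-(1/2 : ℝ) * u x) * w x = c := fun _ _ _ h => h
  have esum : ∀ u w : Fin n → ℝ,
      ∑ x, (-(1/2 : ℝ) * u x) * w x = -(1/2) * ∑ x, u x * w x := by
    intro u w
    rw [Finset.mul_sum]
    exact Finset.sum_congr rfl fun x _ => by ring
  have e00 : (B * A) 0 0 = (1/2) * t := by
    have h : (B * A) 0 0 = ∑ x, (-(1/2 : ℝ) * b x) * a x := by
      rw [Matrix.mul_apply]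
      exact Finset.sum_congr rfl fun x _ => by
        simp only [hA, hB, Matrix.of_apply, Matrix.cons_val_zero]
    rw [h, esum, hb, ha, dotJ, if_neg (Ne.symm hne)]
    ring
  have e01 : (B * A) 0 1 = -(1/2) * (1 - t) := by
    have h : (B * A) 0 1 = ∑ x, (-(1/2 : ℝ) * b x) * b x := by
      rw [Matrix.mul_apply]
      exact Finset.sum_congr rfl fun x _ => by
        simp only [hA, hB, Matrix.of_apply, Matrix.cons_val_zero, Matrix.cons_val_one,
          Matrix.head_cons]
    rw [h, esum, hb, dotJ, if_pos rfl]
  have e10 : (B * A) 1 0 = -(1/2) * (1 - t) := by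
    have h : (B * A) 1 0 = ∑ x, (-(1/2 : ℝ) * a x) * a x := by
      rw [Matrix.mul_apply]
      exact Finset.sum_congr rfl fun x _ => by
        simp only [hA, hB, Matrix.of_apply, Matrix.cons_val_zero, Matrix.cons_val_one,
          Matrix.head_cons]
    rw [h, esum, ha, dotJ, if_pos rfl]
  have e11 : (B * A) 1 1 = (1/2) * t := by
    have h : (B * A) 1 1 = ∑ x, (-(1/2 : ℝ) * a x) * b x := by
      rw [Matrix.mul_apply]
      exact Finset.sum_congr rfl fun x _ => by
        simp only [hA, hB, Matrix.of_apply, Matrix.cons_val_zero, Matrix.cons_val_one,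
          Matrix.head_cons]
    rw [h, esum, ha, hb, dotJ, if_neg hne]
    ring
  have hBA : (B * A).charpoly = (X - C (1/2 : ℝ)) * (X - C (t - 1/2)) := by
    rw [Matrix.charpoly, Matrix.det_fin_two, charmatrix_apply_eq, charmatrix_apply_eq,
      charmatrix_apply_ne _ _ _ (by decide : (0 : Fin 2) ≠ 1),
      charmatrix_apply_ne _ _ _ (by decide : (1 : Fin 2) ≠ 0),
      e00, e01, e10, e11]
    have expand1 : (X - C ((1/2) * t)) * (X - C ((1/2) * t))
        - (-C (-(1/2) * (1 - t))) * (-C (-(1/2) * (1 - t)))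
        = (X - C ((1/2)*t + (1/2)*(1-t))) * (X - C ((1/2)*t - (1/2)*(1-t))) := by
      simp only [C_add, C_sub, C_mul, C_neg, C_1]
      ring
    rw [expand1]
    apply quad_eq <;> ring
  have key := charpoly_AB_BA A B
  rw [← hv, hBA] at key
  have hX2 : (X : Polynomial ℝ) ^ 2 ≠ 0 := pow_ne_zero _ X_ne_zero
  have hpow : (X : Polynomial ℝ) ^ n = X ^ 2 * X ^ (n - 2) := by
    rw [← pow_add]
    congr 1
    omega
  rw [hpow, mul_assoc] at key
  have hcancel := mul_left_cancel₀ hX2 key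
  rw [hcancel, mul_assoc]
end

section
/- Stability under additive noise: let D̃ ∈ ℝ^{n×n} be a nonzero symmetric matrix with zero diagonal, and set X̄ − X = Σ_{(i,j) ∈ 𝕀} D̃_{i,j} · v_{i,j} (the perturbation of the Gram matrix induced by the noise D̃). Then ‖X̄ − X‖_∞ < 4 · ‖D̃‖_∞, where ‖M‖_∞ = max_{a,b} |M_{a,b}| denotes the largest entry of a matrix in absolute value. -/
open Matrix

/-- The entrywise max norm of a matrix: `‖M‖_∞ = max_{a,b} |M_{a,b}|`. -/
noncomputable def maxNorm {n : ℕ} (M : Matrix (Fin n) (Fin n) ℝ) : ℝ :=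
  ⨆ q : Fin n × Fin n, |M q.1 q.2|

lemma dsum {n : ℕ} (a b : Fin n → ℝ) :
    ∑ i, ∑ j, (a i * b j + a j * b i) = 2 * ((∑ i, a i) * (∑ j, b j)) := by
  have h1 : ∑ i, ∑ j, (a i * b j + a j * b i)
      = (∑ i, ∑ j, a i * b j) + ∑ i, ∑ j, a j * b i := by
    rw [← Finset.sum_add_distrib]
    apply Finset.sum_congr rfl
    intro i _
    rw [← Finset.sum_add_distrib]
  have h2 : (∑ i, ∑ j, a i * b j) = (∑ i, a i) * (∑ j, b j) := by
    rw [Finset.sum_mul]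
    apply Finset.sum_congr rfl
    intro i _
    rw [Finset.mul_sum]
  have h3 : (∑ i : Fin n, ∑ j, a j * b i) = (∑ i, a i) * (∑ j, b j) := by
    rw [Finset.sum_comm]
    rw [Finset.sum_mul]
    apply Finset.sum_congr rfl
    intro i _
    rw [Finset.mul_sum]
  rw [h1, h2, h3]
  ring

lemma pairsum {n : ℕ} (g : Fin n → Fin n → ℝ) (hsym : ∀ i j, g i j = g j i)
    (hdg : ∀ i, g i i = 0) :
    ∑ α : Idx n, g α.1.1 α.1.2 = (∑ i, ∑ j, g i j) / 2 := by
  have h1 : ∑ α : Idx n, g α.1.1 α.1.2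
      = ∑ p ∈ Finset.univ.filter (fun p : Fin n × Fin n => p.1 < p.2), g p.1 p.2 :=
    (Finset.sum_subtype (p := fun p : Fin n × Fin n => p.1 < p.2)
      (Finset.univ.filter (fun p : Fin n × Fin n => p.1 < p.2))
      (fun x => by simp) (fun p => g p.1 p.2)).symm
  have hswap : ∑ p ∈ Finset.univ.filter (fun p : Fin n × Fin n => p.2 < p.1), g p.1 p.2
      = ∑ p ∈ Finset.univ.filter (fun p : Fin n × Fin n => p.1 < p.2), g p.1 p.2 := by
    apply Finset.sum_nbij' (fun p => Prod.swap p) (fun p => Prod.swap p)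
    · intro a ha; simp at ha ⊢; exact ha
    · intro a ha; simp at ha ⊢; exact ha
    · intro a _; simp
    · intro a _; simp
    · intro a _; exact hsym a.1 a.2
  have h2 : ∑ i, ∑ j, g i j = ∑ p : Fin n × Fin n, g p.1 p.2 := by
    rw [Fintype.sum_prod_type]
  rw [h1, h2]
  rw [← Finset.sum_filter_add_sum_filter_not Finset.univ (fun p : Fin n × Fin n => p.1 < p.2)]
  have h3 : ∑ p ∈ Finset.univ.filter (fun p : Fin n × Fin n => ¬ p.1 < p.2), g p.1 p.2
      = ∑ p ∈ Finset.univ.filter (fun p : Fin n × Fin n => p.1 < p.2), g p.1 p.2 := by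
    rw [← Finset.sum_filter_add_sum_filter_not
      (Finset.univ.filter (fun p : Fin n × Fin n => ¬ p.1 < p.2))
      (fun p : Fin n × Fin n => p.2 < p.1)]
    rw [Finset.filter_filter, Finset.filter_filter]
    have e1 : (Finset.univ.filter fun p : Fin n × Fin n => ¬ p.1 < p.2 ∧ p.2 < p.1)
        = Finset.univ.filter fun p : Fin n × Fin n => p.2 < p.1 := by
      apply Finset.filter_congr; intro p _
      constructor
      · rintro ⟨_, h⟩; exact h
      · intro h; exact ⟨not_lt_of_gt h |>.imp id, h⟩
    have e2 : ∑ p ∈ (Finset.univ.filter fun p : Fin n × Fin n => ¬ p.1 < p.2 ∧ ¬ p.2 < p.1),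
        g p.1 p.2 = 0 := by
      apply Finset.sum_eq_zero
      intro p hp
      simp only [Finset.mem_filter] at hp
      have : p.1 = p.2 := le_antisymm (not_lt.mp hp.2.2) (not_lt.mp hp.2.1)
      rw [this]; exact hdg p.2
    rw [e1, e2, add_zero, hswap]
  rw [h3]
  ring

/-- Stability under additive noise: if `D̃` is a nonzero symmetric matrix with zero
diagonal, then the induced perturbation `X̄ - X = Σ_{(i,j) ∈ 𝕀} D̃_{i,j} v_{i,j}` of
the Gram matrix satisfies `‖X̄ - X‖_∞ < 4 ‖D̃‖_∞`. -/
theorem stmt13 {n : ℕ} (hn : 2 ≤ n) (Dt : Matrix (Fin n) (Fin n) ℝ)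
    (hsymm : Dt.IsSymm) (hdiag : ∀ i, Dt i i = 0) (hne : Dt ≠ 0) :
    maxNorm (∑ α : Idx n, Dt α.1.1 α.1.2 • v α) < 4 * maxNorm Dt := by
  have hn0 : (0 : ℝ) < n := by positivity
  have hnR : (n : ℝ) ≠ 0 := ne_of_gt hn0
  haveI : NeZero n := ⟨by omega⟩
  set m := maxNorm Dt with hm
  -- basic facts about maxNorm Dt
  have hbdd : BddAbove (Set.range fun q : Fin n × Fin n => |Dt q.1 q.2|) :=
    (Set.finite_range _).bddAbove
  have hle : ∀ i j, |Dt i j| ≤ m := fun i j => le_ciSup hbdd (i, j)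
  have hmpos : 0 < m := by
    have : ∃ i j, Dt i j ≠ 0 := by
      by_contra h
      push_neg at h
      apply hne
      ext i j
      exact h i j
    obtain ⟨i, j, hij⟩ := this
    exact lt_of_lt_of_le (abs_pos.mpr hij) (hle i j)
  -- bound on column sums of |Jmat|
  have hJabs : ∀ x i : Fin n, |Jmat n x i| ≤ (if x = i then (1:ℝ) else 0) + (n:ℝ)⁻¹ := by
    intro x i
    have : Jmat n x i = (if x = i then (1:ℝ) else 0) - (n:ℝ)⁻¹ := by
      simp [Jmat, Matrix.sub_apply, Matrix.one_apply, Matrix.smul_apply]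
    rw [this]
    calc |(if x = i then (1:ℝ) else 0) - (n:ℝ)⁻¹|
        ≤ |(if x = i then (1:ℝ) else 0)| + |(n:ℝ)⁻¹| := abs_sub _ _
      _ = (if x = i then (1:ℝ) else 0) + (n:ℝ)⁻¹ := by
          rw [abs_of_nonneg (by positivity), abs_of_nonneg (by positivity)]
  have hA : ∀ x : Fin n, ∑ i, |Jmat n x i| ≤ 2 := by
    intro x
    calc ∑ i, |Jmat n x i| ≤ ∑ i, ((if x = i then (1:ℝ) else 0) + (n:ℝ)⁻¹) :=
          Finset.sum_le_sum fun i _ => hJabs x i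
      _ = (∑ i, (if x = i then (1:ℝ) else 0)) + ∑ _i : Fin n, (n:ℝ)⁻¹ := Finset.sum_add_distrib
      _ = 1 + 1 := by
          rw [Finset.sum_ite_eq Finset.univ x (fun _ => (1:ℝ)) , Finset.sum_const]
          simp [Finset.card_univ, mul_inv_cancel₀ hnR]
      _ = 2 := by norm_num
  -- entrywise bound on the sum matrix
  set S := ∑ α : Idx n, Dt α.1.1 α.1.2 • v α with hS
  have hentry : ∀ x y : Fin n, |S x y| ≤ 2 * m := by
    intro x y
    have hSxy : S x y = ∑ α : Idx n,
        Dt α.1.1 α.1.2 * ((-(1/2):ℝ) *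
          (Jmat n x α.1.1 * Jmat n y α.1.2 + Jmat n x α.1.2 * Jmat n y α.1.1)) := by
      rw [hS]
      rw [Matrix.sum_apply]
      apply Finset.sum_congr rfl
      intro α _
      simp [v, Jcol, Matrix.smul_apply, Matrix.add_apply, Matrix.vecMulVec_apply, smul_eq_mul]
      ring
    set g : Fin n → Fin n → ℝ := fun i j =>
      Dt i j * ((-(1/2):ℝ) * (Jmat n x i * Jmat n y j + Jmat n x j * Jmat n y i)) with hg
    have hgsym : ∀ i j, g i j = g j i := by
      intro i j
      simp only [hg]
      rw [hsymm.apply]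
      ring
    have hgdg : ∀ i, g i i = 0 := by intro i; simp [hg, hdiag i]
    rw [hSxy, pairsum g hgsym hgdg]
    rw [abs_div]
    have habs2 : |(2:ℝ)| = 2 := by norm_num
    rw [habs2]
    rw [div_le_iff₀ (by norm_num : (0:ℝ) < 2)]
    -- now bound |∑ i ∑ j g i j| ≤ 4 m
    have hb : |∑ i, ∑ j, g i j| ≤ 4 * m := by
      calc |∑ i, ∑ j, g i j| ≤ ∑ i, |∑ j, g i j| := Finset.abs_sum_le_sum_abs _ _
        _ ≤ ∑ i, ∑ j, |g i j| := Finset.sum_le_sum fun i _ => Finset.abs_sum_le_sum_abs _ _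
        _ ≤ ∑ i, ∑ j, m * (1/2) *
            (|Jmat n x i| * |Jmat n y j| + |Jmat n x j| * |Jmat n y i|) := by
            apply Finset.sum_le_sum; intro i _
            apply Finset.sum_le_sum; intro j _
            have : |g i j| = |Dt i j| * ((1/2) *
                |Jmat n x i * Jmat n y j + Jmat n x j * Jmat n y i|) := by
              simp only [hg, abs_mul]
              norm_num
            rw [this]
            have h1 : |Jmat n x i * Jmat n y j + Jmat n x j * Jmat n y i|
                ≤ |Jmat n x i| * |Jmat n y j| + |Jmat n x j| * |Jmat n y i| := by
              calc _ ≤ |Jmat n x i * Jmat n y j| + |Jmat n x j * Jmat n y i| := abs_add_le _ _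
                _ = _ := by rw [abs_mul, abs_mul]
            calc |Dt i j| * ((1/2) * |Jmat n x i * Jmat n y j + Jmat n x j * Jmat n y i|)
                ≤ m * ((1/2) * (|Jmat n x i| * |Jmat n y j| + |Jmat n x j| * |Jmat n y i|)) := by
                  apply mul_le_mul (hle i j) _ (by positivity) (le_of_lt hmpos)
                  exact mul_le_mul_of_nonneg_left h1 (by norm_num)
              _ = m * (1/2) * (|Jmat n x i| * |Jmat n y j| + |Jmat n x j| * |Jmat n y i|) := by ring
        _ = m * (1/2) * (∑ i, ∑ j,
              (|Jmat n x i| * |Jmat n y j| + |Jmat n x j| * |Jmat n y i|)) := by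
            simp only [Finset.mul_sum]
        _ = m * (1/2) * (2 * ((∑ i, |Jmat n x i|) * (∑ j, |Jmat n y j|))) := by
            rw [dsum]
        _ ≤ 4 * m := by
            have h2 : (∑ i, |Jmat n x i|) * (∑ j, |Jmat n y j|) ≤ 2 * 2 := by
              apply mul_le_mul (hA x) (hA y) (Finset.sum_nonneg fun _ _ => abs_nonneg _)
                (by norm_num)
            nlinarith [hmpos.le]
    linarith
  -- conclude
  have : maxNorm S ≤ 2 * m := by
    apply ciSup_le
    intro q
    exact hentry q.1 q.2
  linarith
end

section
/- The entries of AᵀA are: [AᵀA]_{α,α} = 3(n−2) for every α ∈ 𝕀; [AᵀA]_{α,β} = −1 whenever α ≠ β and the pairs α and β share exactly one common index; and [AᵀA]_{α,β} = 0 whenever α and β are disjoint pairs. -/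
open Matrix

/-- The row index set of the triangle inequality constraint matrix: pairs `(β, c)`
with `β = {i,k} ∈ 𝕀` and `c ∉ {i,k}`, encoding `D_{i,k} - D_{i,c} - D_{c,k} ≤ 0`. -/
abbrev Row (n : ℕ) := {q : Idx n × Fin n // q.2 ≠ q.1.1.1 ∧ q.2 ≠ q.1.1.2}

/-- The triangle inequality constraint matrix `A`: the row indexed by `(β, c)` with
`β = {i,k}` has entry `1` in column `β`, entry `-1` in the columns `{i,c}` and `{k,c}`,
and `0` elsewhere. -/
noncomputable def Amat (n : ℕ) : Matrix (Row n) (Idx n) ℝ :=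
  Matrix.of fun q γ =>
    if γ = q.1.1 then 1
    else if ({γ.1.1, γ.1.2} : Finset (Fin n)) = {q.1.1.1.1, q.1.2} ∨
            ({γ.1.1, γ.1.2} : Finset (Fin n)) = {q.1.1.1.2, q.1.2} then -1
    else 0

open Finset

/-- Entry of `A` in the row with data `(i,k,c)` and the column `{x,y}`, expressed
purely in terms of equalities. -/
def Ent {n : ℕ} (x y i k c : Fin n) : ℝ :=
  if x = i ∧ y = k then 1
  else if ((x = i ∧ y = c) ∨ (x = c ∧ y = i)) ∨ ((x = k ∧ y = c) ∨ (x = c ∧ y = k)) then -1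
  else 0

lemma pair_eq {n : ℕ} {x y u v : Fin n} :
    ({x,y} : Finset (Fin n)) = {u,v} ↔ (x=u∧y=v)∨(x=v∧y=u) := by
  constructor
  · intro h
    have hx : x ∈ ({u,v} : Finset (Fin n)) := by rw [← h]; simp
    have hy : y ∈ ({u,v} : Finset (Fin n)) := by rw [← h]; simp
    have hu : u ∈ ({x,y} : Finset (Fin n)) := by rw [h]; simp
    have hv : v ∈ ({x,y} : Finset (Fin n)) := by rw [h]; simp
    simp only [Finset.mem_insert, Finset.mem_singleton] at hx hy hu hv
    tauto
  · rintro (⟨rfl, rfl⟩ | ⟨rfl, rfl⟩)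
    · rfl
    · exact Finset.pair_comm x y

lemma Amat_eq {n : ℕ} (q : Row n) (γ : Idx n) :
    Amat n q γ = Ent γ.1.1 γ.1.2 q.1.1.1.1 q.1.1.1.2 q.1.2 := by
  unfold Amat Ent
  rw [Matrix.of_apply]
  have h1 : (γ = q.1.1) ↔ (γ.1.1 = q.1.1.1.1 ∧ γ.1.2 = q.1.1.1.2) := by
    rw [Subtype.ext_iff, Prod.ext_iff]
  rw [if_congr h1 rfl rfl, if_congr (or_congr pair_eq pair_eq) rfl rfl]

lemma sum_Idx {n : ℕ} (G : Fin n → Fin n → ℝ) :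
    ∑ γ : Idx n, G γ.1.1 γ.1.2
    = ∑ i, ∑ k, if i < k then G i k else 0 := by
  rw [← Finset.sum_subtype (univ.filter fun p : Fin n × Fin n => p.1 < p.2)
      (by simp) (fun p => G p.1 p.2)]
  rw [Finset.sum_filter, Fintype.sum_prod_type]

lemma sum_Row {n : ℕ} (F : Fin n → Fin n → Fin n → ℝ) :
    ∑ q : Row n, F q.1.1.1.1 q.1.1.1.2 q.1.2
    = ∑ i, ∑ k, ∑ c, if i < k ∧ c ≠ i ∧ c ≠ k then F i k c else 0 := by
  rw [← Finset.sum_subtype (univ.filter fun q : Idx n × Fin n => q.2 ≠ q.1.1.1 ∧ q.2 ≠ q.1.1.2)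
      (by simp) (fun q => F q.1.1.1 q.1.1.2 q.2)]
  rw [Finset.sum_filter, Fintype.sum_prod_type]
  rw [sum_Idx (fun i k => ∑ c, if c ≠ i ∧ c ≠ k then F i k c else 0)]
  refine Finset.sum_congr rfl fun i _ => Finset.sum_congr rfl fun k _ => ?_
  split_ifs with h
  · exact Finset.sum_congr rfl fun c _ => by simp [h]
  · rw [eq_comm, Finset.sum_eq_zero]
    intro c _
    simp [h]

lemma AtA_apply {n : ℕ} (α β : Idx n) :
    ((Amat n)ᵀ * Amat n) α β
    = ∑ i, ∑ k, ∑ c, if i < k ∧ c ≠ i ∧ c ≠ k then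
        Ent α.1.1 α.1.2 i k c * Ent β.1.1 β.1.2 i k c else 0 := by
  rw [Matrix.mul_apply]
  simp only [Matrix.transpose_apply, Amat_eq]
  exact sum_Row (fun i k c => Ent α.1.1 α.1.2 i k c * Ent β.1.1 β.1.2 i k c)

lemma c1 {n : ℕ} (a b : Fin n) (P : Fin n → Prop) [DecidablePred P] :
    ∑ i : Fin n, ∑ k : Fin n, ∑ c : Fin n, (if i = a ∧ k = b ∧ P c then (1:ℝ) else 0)
    = (univ.filter P).card := by
  simp [ite_and, Finset.sum_ite_eq, Finset.sum_boole]

lemma c2 {n : ℕ} (a b : Fin n) (Q : Fin n → Prop) [DecidablePred Q] :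
    ∑ i : Fin n, ∑ k : Fin n, ∑ c : Fin n, (if i = a ∧ Q k ∧ c = b then (1:ℝ) else 0)
    = (univ.filter Q).card := by
  simp [ite_and, Finset.sum_ite_eq, Finset.sum_boole]

lemma c3 {n : ℕ} (a b : Fin n) (P : Fin n → Prop) [DecidablePred P] :
    ∑ i : Fin n, ∑ k : Fin n, ∑ c : Fin n, (if P i ∧ k = a ∧ c = b then (1:ℝ) else 0)
    = (univ.filter P).card := by
  simp [ite_and, Finset.sum_ite_eq, Finset.sum_boole]

lemma card_two_excl {n : ℕ} (a b : Fin n) (h : a ≠ b) :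
    (univ.filter fun x : Fin n => x ≠ a ∧ x ≠ b).card = n - 2 := by
  have : (univ.filter fun x : Fin n => x ≠ a ∧ x ≠ b) = univ \ {a, b} := by
    ext x; simp
  rw [this, Finset.card_sdiff_of_subset (by simp)]
  simp [Finset.card_pair h]

lemma card_split {n : ℕ} (a b : Fin n) :
    (univ.filter fun x : Fin n => a < x ∧ x ≠ b).card
    + (univ.filter fun x : Fin n => x < a ∧ x ≠ b).card
    = (univ.filter fun x : Fin n => x ≠ a ∧ x ≠ b).card := by
  rw [← Finset.card_union_of_disjoint]
  · congr 1; ext x; simp; omega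
  · rw [Finset.disjoint_left]; intro x hx hy; simp at hx hy; omega

set_option maxHeartbeats 2000000 in
lemma diag_calc {n : ℕ} (hn : 3 ≤ n) (a b : Fin n) (hab : a < b) :
    ∑ i, ∑ k, ∑ c, (if i < k ∧ c ≠ i ∧ c ≠ k then Ent a b i k c * Ent a b i k c else 0)
    = 3 * ((n : ℝ) - 2) := by
  have hpt : ∀ i k c : Fin n,
      (if i < k ∧ c ≠ i ∧ c ≠ k then Ent a b i k c * Ent a b i k c else 0) =
      (if i = a ∧ k = b ∧ (c ≠ a ∧ c ≠ b) then (1:ℝ) else 0) +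
      (if i = a ∧ (a < k ∧ k ≠ b) ∧ c = b then (1:ℝ) else 0) +
      (if (i < a ∧ i ≠ b) ∧ k = a ∧ c = b then (1:ℝ) else 0) +
      (if i = b ∧ (b < k ∧ k ≠ a) ∧ c = a then (1:ℝ) else 0) +
      (if (i < b ∧ i ≠ a) ∧ k = b ∧ c = a then (1:ℝ) else 0) := by
    intro i k c
    unfold Ent
    split_ifs
    all_goals try norm_num
    all_goals (exfalso; omega)
  rw [Finset.sum_congr rfl fun i _ => Finset.sum_congr rfl fun k _ =>
      Finset.sum_congr rfl fun c _ => hpt i k c]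
  simp only [Finset.sum_add_distrib]
  rw [c1 a b, c2 a b, c3 a b, c2 b a, c3 b a]
  rw [card_two_excl a b hab.ne]
  have h2 : (2:ℕ) ≤ n := by omega
  have g0 : ((n-2:ℕ):ℝ) = (n:ℝ) - 2 := by push_cast [Nat.cast_sub h2]; ring
  have g1 : ((univ.filter fun x : Fin n => a < x ∧ x ≠ b).card : ℝ)
      + ((univ.filter fun x : Fin n => x < a ∧ x ≠ b).card : ℝ) = (n:ℝ) - 2 := by
    rw [← g0]
    exact_mod_cast congrArg (Nat.cast : ℕ → ℝ)
      ((card_split a b).trans (card_two_excl a b hab.ne))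
  have g2 : ((univ.filter fun x : Fin n => b < x ∧ x ≠ a).card : ℝ)
      + ((univ.filter fun x : Fin n => x < b ∧ x ≠ a).card : ℝ) = (n:ℝ) - 2 := by
    rw [← g0]
    exact_mod_cast congrArg (Nat.cast : ℕ → ℝ)
      ((card_split b a).trans (card_two_excl b a hab.ne'))
  rw [g0]; linarith [g1, g2]

lemma sum3_point {n : ℕ} (x y z : Fin n) (v : ℝ) :
    ∑ i : Fin n, ∑ k : Fin n, ∑ c : Fin n, (if i = x ∧ k = y ∧ c = z then v else 0) = v := by
  simp [ite_and, Finset.sum_ite_eq]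

lemma offdiag_block {n : ℕ} (a b d e : Fin n) (x1 y1 z1 x2 y2 z2 x3 y3 z3 : Fin n)
    (hpt : ∀ i k c : Fin n,
      (if i < k ∧ c ≠ i ∧ c ≠ k then Ent a b i k c * Ent d e i k c else 0) =
      (if i = x1 ∧ k = y1 ∧ c = z1 then (-1:ℝ) else 0) +
      (if i = x2 ∧ k = y2 ∧ c = z2 then (-1:ℝ) else 0) +
      (if i = x3 ∧ k = y3 ∧ c = z3 then (1:ℝ) else 0)) :
    ∑ i, ∑ k, ∑ c, (if i < k ∧ c ≠ i ∧ c ≠ k then Ent a b i k c * Ent d e i k c else 0) = -1 := by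
  rw [Finset.sum_congr rfl fun i _ => Finset.sum_congr rfl fun k _ =>
      Finset.sum_congr rfl fun c _ => hpt i k c]
  simp only [Finset.sum_add_distrib, sum3_point]
  norm_num

lemma disj_calc {n : ℕ} (a b d e : Fin n) (hab : a < b) (hde : d < e)
    (h1 : a ≠ d) (h2 : a ≠ e) (h3 : b ≠ d) (h4 : b ≠ e) :
    ∑ i, ∑ k, ∑ c, (if i < k ∧ c ≠ i ∧ c ≠ k then Ent a b i k c * Ent d e i k c else 0) = 0 := by
  refine Finset.sum_eq_zero fun i _ => Finset.sum_eq_zero fun k _ =>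
    Finset.sum_eq_zero fun c _ => ?_
  unfold Ent
  split_ifs
  all_goals try norm_num
  all_goals (exfalso; omega)

set_option maxHeartbeats 2000000 in
lemma offdiag_calc {n : ℕ} (a b d e : Fin n) (hab : a < b) (hde : d < e)
    (hshare : a = d ∨ a = e ∨ b = d ∨ b = e) (hne : ¬(a = d ∧ b = e)) :
    ∑ i, ∑ k, ∑ c, (if i < k ∧ c ≠ i ∧ c ≠ k then Ent a b i k c * Ent d e i k c else 0)
    = -1 := by
  rcases hshare with rfl | hae | hbd | hbe
  · -- a = d, β = (a, e), b ≠ e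
    have hbe : b ≠ e := fun h => hne ⟨rfl, h⟩
    rcases hbe.lt_or_gt with hlt | hlt
    · apply offdiag_block a b a e a b e a e b b e a
      intro i k c; unfold Ent; split_ifs
      all_goals try norm_num
      all_goals (exfalso; omega)
    · apply offdiag_block a b a e a b e a e b e b a
      intro i k c; unfold Ent; split_ifs
      all_goals try norm_num
      all_goals (exfalso; omega)
  · -- a = e, so d < a < b
    subst hae
    apply offdiag_block a b d a a b d d a b d b a
    intro i k c; unfold Ent; split_ifs
    all_goals try norm_num
    all_goals (exfalso; omega)
  · -- b = d, so a < b < e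
    subst hbd
    apply offdiag_block a b b e a b e b e a a e b
    intro i k c; unfold Ent; split_ifs
    all_goals try norm_num
    all_goals (exfalso; omega)
  · -- b = e, β = (d, b), a ≠ d
    subst hbe
    have had : a ≠ d := fun h => hne ⟨h, rfl⟩
    rcases had.lt_or_gt with hlt | hlt
    · apply offdiag_block a b d b a b d d b a a d b
      intro i k c; unfold Ent; split_ifs
      all_goals try norm_num
      all_goals (exfalso; omega)
    · apply offdiag_block a b d b a b d d b a d a b
      intro i k c; unfold Ent; split_ifs
      all_goals try norm_num
      all_goals (exfalso; omega)

/-- The entries of `AᵀA`: diagonal entries equal `3(n-2)`; off-diagonal entries equal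
`-1` when the two pairs share exactly one common index, and `0` when the pairs are
disjoint. -/
theorem stmt14 {n : ℕ} (hn : 3 ≤ n) (α β : Idx n) :
    ((Amat n)ᵀ * Amat n) α α = 3 * ((n : ℝ) - 2) ∧
    (α ≠ β ∧ (({α.1.1, α.1.2} : Finset (Fin n)) ∩ {β.1.1, β.1.2}).card = 1 →
      ((Amat n)ᵀ * Amat n) α β = -1) ∧
    (({α.1.1, α.1.2} : Finset (Fin n)) ∩ {β.1.1, β.1.2} = ∅ →
      ((Amat n)ᵀ * Amat n) α β = 0) := by
  obtain ⟨⟨a, b⟩, hab⟩ := α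
  obtain ⟨⟨d, e⟩, hde⟩ := β
  simp only at hab hde
  refine ⟨?_, ?_, ?_⟩
  · rw [AtA_apply]
    exact diag_calc hn a b hab
  · rintro ⟨hne, hcard⟩
    rw [AtA_apply]
    have hne' : ¬(a = d ∧ b = e) := by
      rintro ⟨rfl, rfl⟩
      exact hne rfl
    have hshare : a = d ∨ a = e ∨ b = d ∨ b = e := by
      by_contra h
      push_neg at h
      obtain ⟨h1, h2, h3, h4⟩ := h
      have : ({a, b} : Finset (Fin n)) ∩ {d, e} = ∅ := by
        ext x
        simp only [Finset.mem_inter, Finset.mem_insert, Finset.mem_singleton,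
          Finset.notMem_empty, iff_false]
        rintro ⟨rfl | rfl, rfl | rfl⟩ <;> simp_all
      rw [this] at hcard
      simp at hcard
    exact offdiag_calc a b d e hab hde hshare hne'
  · intro hdisj
    rw [AtA_apply]
    have hmem : ∀ x : Fin n, ¬(x ∈ ({a, b} : Finset (Fin n)) ∧ x ∈ ({d, e} : Finset (Fin n))) := by
      intro x ⟨hx1, hx2⟩
      have : x ∈ ({a, b} : Finset (Fin n)) ∩ {d, e} := Finset.mem_inter.mpr ⟨hx1, hx2⟩
      rw [hdisj] at this
      exact absurd this (Finset.notMem_empty x)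
    have h1 : a ≠ d := fun h => hmem a ⟨by simp, by simp [h]⟩
    have h2 : a ≠ e := fun h => hmem a ⟨by simp, by simp [h]⟩
    have h3 : b ≠ d := fun h => hmem b ⟨by simp, by simp [h]⟩
    have h4 : b ≠ e := fun h => hmem b ⟨by simp, by simp [h]⟩
    exact disj_calc a b d e hab hde h1 h2 h3 h4
end

section
/- For n ≥ 3, the characteristic polynomial of AᵀA is (x − (3n−4))^{L−n} · (x − (2n−2))^{n−1} · (x − (n−2)); equivalently, the eigenvalues of AᵀA are 3n−4, 2n−2 and n−2 with algebraic multiplicities L − n = n(n−3)/2, n−1 and 1, respectively (so the singular values of A are √(3n−4), √(2n−2) and √(n−2) with these multiplicities). -/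
open Matrix Polynomial

section AuxStmt16
open Matrix Polynomial Finset

/-- 0/1 indicator of a proposition. -/
noncomputable def ind (P : Prop) : ℝ := @ite ℝ P (Classical.dec P) 1 0
lemma ind_true {P : Prop} (h : P) : ind P = 1 := by unfold ind; exact if_pos h
lemma ind_false {P : Prop} (h : ¬ P) : ind P = 0 := by unfold ind; exact if_neg h
lemma ind_congr {P Q : Prop} (h : P ↔ Q) : ind P = ind Q := by
  have : P = Q := propext h
  subst this; rfl
lemma ind_mul (P Q : Prop) : ind P * ind Q = ind (P ∧ Q) := by
  by_cases hP : P
  · by_cases hQ : Q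
    · rw [ind_true hP, ind_true hQ, ind_true ⟨hP, hQ⟩]; ring
    · rw [ind_false hQ, ind_false (fun (h : P ∧ Q) => hQ h.2)]; ring
  · rw [ind_false hP, ind_false (fun (h : P ∧ Q) => hP h.1), zero_mul]
lemma ind_or {P Q : Prop} (h : ¬(P ∧ Q)) : ind (P ∨ Q) = ind P + ind Q := by
  by_cases hP : P
  · rw [ind_true (Or.inl hP), ind_true hP, ind_false (fun hQ => h ⟨hP, hQ⟩)]; ring
  · by_cases hQ : Q
    · rw [ind_true (Or.inr hQ), ind_false hP, ind_true hQ]; ring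
    · rw [ind_false (fun (hh : P ∨ Q) => hh.elim hP hQ), ind_false hP, ind_false hQ]; ring

variable {α : Type*} [Fintype α] [DecidableEq α]

lemma sum_ind_eq (x : α) (P : α → Prop) :
    ∑ y : α, ind (y = x ∧ P y) = ind (P x) := by
  classical
  have : ∀ y : α, ind (y = x ∧ P y) = if y = x then ind (P y) else 0 := by
    intro y; by_cases h : y = x
    · rw [if_pos h]; exact ind_congr (by simp [h])
    · rw [if_neg h]; exact ind_false (by tauto)
  rw [Finset.sum_congr rfl fun y _ => this y, Finset.sum_ite_eq' Finset.univ x]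
  simp
lemma sum_ind_and (X : Prop) (Y : α → Prop) :
    ∑ y : α, ind (X ∧ Y y) = ind X * ∑ y : α, ind (Y y) := by
  rw [Finset.mul_sum]
  exact Finset.sum_congr rfl fun y _ => by rw [ind_mul]

lemma sum_ind_card (P : α → Prop) [DecidablePred P] :
    ∑ y : α, ind (P y) = ((Finset.univ.filter P).card : ℝ) := by
  classical
  rw [← Finset.sum_boole]
  refine Finset.sum_congr rfl fun y _ => ?_
  unfold ind; split_ifs with h1 h2 <;> first | rfl | tauto

-- counting lemmas on Fin n
variable {n : ℕ}

lemma cnt_ne_ne {a b : Fin n} (h : a ≠ b) :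
    ∑ c : Fin n, ind (c ≠ a ∧ c ≠ b) = ((n - 2 : ℕ) : ℝ) := by
  classical
  rw [sum_ind_card]
  congr 1
  have : Finset.univ.filter (fun c : Fin n => c ≠ a ∧ c ≠ b) = Finset.univ \ {a, b} := by
    ext c; simp [not_or]
  rw [this, Finset.card_sdiff_of_subset (by simp), Finset.card_pair h]
  simp

lemma cnt_Ioi_ne {x y : Fin n} (h : x < y) :
    ∑ j : Fin n, ind (x < j ∧ j ≠ y) = ((n - 2 - (x : ℕ) : ℕ) : ℝ) := by
  classical
  rw [sum_ind_card]
  congr 1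
  have : Finset.univ.filter (fun j : Fin n => x < j ∧ j ≠ y) = Finset.Ioi x \ {y} := by
    ext j; simp [and_comm]
  rw [this, Finset.card_sdiff_of_subset (by simp [h]), Fin.card_Ioi, Finset.card_singleton]
  omega

lemma cnt_Ioi_ne' {x y : Fin n} (h : y < x) :
    ∑ j : Fin n, ind (x < j ∧ j ≠ y) = ((n - 1 - (x : ℕ) : ℕ) : ℝ) := by
  classical
  rw [sum_ind_card]
  congr 1
  have : Finset.univ.filter (fun j : Fin n => x < j ∧ j ≠ y) = Finset.Ioi x := by
    ext j
    simp only [Finset.mem_filter, Finset.mem_univ, true_and, Finset.mem_Ioi]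
    refine ⟨fun hh => hh.1, fun hj => ⟨hj, ?_⟩⟩
    rintro rfl; exact absurd (h.trans hj) (lt_irrefl _)
  rw [this, Fin.card_Ioi]

lemma cnt_Iio_ne {x y : Fin n} (h : y < x) :
    ∑ i : Fin n, ind (i < x ∧ i ≠ y) = (((x : ℕ) - 1 : ℕ) : ℝ) := by
  classical
  rw [sum_ind_card]
  congr 1
  have : Finset.univ.filter (fun i : Fin n => i < x ∧ i ≠ y) = Finset.Iio x \ {y} := by
    ext i; simp [and_comm]
  rw [this, Finset.card_sdiff_of_subset (by simp [h]), Fin.card_Iio, Finset.card_singleton]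

lemma cnt_Iio_ne' {x y : Fin n} (h : x < y) :
    ∑ i : Fin n, ind (i < x ∧ i ≠ y) = ((x : ℕ) : ℝ) := by
  classical
  rw [sum_ind_card]
  congr 1
  have : Finset.univ.filter (fun i : Fin n => i < x ∧ i ≠ y) = Finset.Iio x := by
    ext i
    simp only [Finset.mem_filter, Finset.mem_univ, true_and, Finset.mem_Iio]
    refine ⟨fun hh => hh.1, fun hi => ⟨hi, ?_⟩⟩
    rintro rfl; exact absurd (h.trans hi) (lt_irrefl _)
  rw [this, Fin.card_Iio]

lemma idx_sum (f : Fin n × Fin n → ℝ) :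
    ∑ γ : Idx n, f γ.1 = ∑ i : Fin n, ∑ j : Fin n, if i < j then f (i, j) else 0 := by
  classical
  rw [← Finset.sum_subtype (Finset.univ.filter fun p : Fin n × Fin n => p.1 < p.2)
    (by simp) f]
  rw [Finset.sum_filter, Fintype.sum_prod_type]

lemma row_sum (f : Idx n × Fin n → ℝ) :
    ∑ q : Row n, f q.1 =
      ∑ β : Idx n, ∑ c : Fin n, if c ≠ β.1.1 ∧ c ≠ β.1.2 then f (β, c) else 0 := by
  classical
  rw [← Finset.sum_subtype
    (Finset.univ.filter fun q : Idx n × Fin n => q.2 ≠ q.1.1.1 ∧ q.2 ≠ q.1.1.2) (by simp) f]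
  rw [Finset.sum_filter, Fintype.sum_prod_type]

lemma pair_eq_s16 {a b c d : Fin n} (hab : a ≠ b) :
    ({a, b} : Finset (Fin n)) = {c, d} ↔ (a = c ∧ b = d) ∨ (a = d ∧ b = c) := by
  constructor
  · intro h
    have ha : a ∈ ({c, d} : Finset (Fin n)) := h ▸ (by simp)
    have hb : b ∈ ({c, d} : Finset (Fin n)) := h ▸ (by simp)
    have hc : c ∈ ({a, b} : Finset (Fin n)) := h ▸ (by simp)
    have hd : d ∈ ({a, b} : Finset (Fin n)) := h ▸ (by simp)
    simp at ha hb hc hd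
    rcases ha with rfl | rfl
    · rcases hb with rfl | rfl
      · tauto
      · tauto
    · rcases hb with rfl | rfl <;> tauto
  · rintro (⟨rfl, rfl⟩ | ⟨rfl, rfl⟩)
    · rfl
    · exact Finset.pair_comm a b

section Collapse
variable {n : ℕ}

lemma sum3_congr {f g : Fin n → Fin n → Fin n → ℝ}
    (h : ∀ i j c, f i j c = g i j c) :
    ∑ i : Fin n, ∑ j : Fin n, ∑ c : Fin n, f i j c
      = ∑ i : Fin n, ∑ j : Fin n, ∑ c : Fin n, g i j c :=
  Finset.sum_congr rfl fun i _ => Finset.sum_congr rfl fun j _ =>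
    Finset.sum_congr rfl fun c _ => h i j c

lemma M_H0 {x y z : Fin n} {W : Prop} {P : Fin n → Fin n → Fin n → Prop}
    (h : ∀ i j c, P i j c ↔ (i = x ∧ j = y ∧ c = z ∧ W)) :
    ∑ i : Fin n, ∑ j : Fin n, ∑ c : Fin n, ind (P i j c) = ind W := by
  rw [sum3_congr fun i j c => ind_congr (h i j c)]
  have h1 : ∀ i j : Fin n, ∑ c : Fin n, ind (i = x ∧ j = y ∧ c = z ∧ W)
      = ind (i = x ∧ j = y ∧ W) := by
    intro i j
    rw [Finset.sum_congr rfl fun c _ => ind_congr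
      (show (i = x ∧ j = y ∧ c = z ∧ W) ↔ (c = z ∧ (i = x ∧ j = y ∧ W)) by tauto)]
    exact sum_ind_eq z _
  rw [Finset.sum_congr rfl fun i _ => Finset.sum_congr rfl fun j _ => h1 i j]
  have h2 : ∀ i : Fin n, ∑ j : Fin n, ind (i = x ∧ j = y ∧ W) = ind (i = x ∧ W) := by
    intro i
    rw [Finset.sum_congr rfl fun j _ => ind_congr
      (show (i = x ∧ j = y ∧ W) ↔ (j = y ∧ (i = x ∧ W)) by tauto)]
    exact sum_ind_eq y _
  rw [Finset.sum_congr rfl fun i _ => h2 i]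
  exact sum_ind_eq x _

lemma M_H1 {x y : Fin n} {W : Prop} {R : Fin n → Prop} {P : Fin n → Fin n → Fin n → Prop}
    (h : ∀ i j c, P i j c ↔ (i = x ∧ j = y ∧ W ∧ R c)) :
    ∑ i : Fin n, ∑ j : Fin n, ∑ c : Fin n, ind (P i j c)
      = ind W * ∑ c : Fin n, ind (R c) := by
  rw [sum3_congr fun i j c => ind_congr (h i j c)]
  have h1 : ∀ i j : Fin n, ∑ c : Fin n, ind (i = x ∧ j = y ∧ W ∧ R c)
      = ind (i = x ∧ j = y ∧ W) * ∑ c : Fin n, ind (R c) := by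
    intro i j
    rw [Finset.sum_congr rfl fun c _ => ind_congr
      (show (i = x ∧ j = y ∧ W ∧ R c) ↔ ((i = x ∧ j = y ∧ W) ∧ R c) by tauto)]
    exact sum_ind_and _ _
  rw [Finset.sum_congr rfl fun i _ => Finset.sum_congr rfl fun j _ => h1 i j]
  have h2 : ∀ i : Fin n, ∑ j : Fin n, ind (i = x ∧ j = y ∧ W) * ∑ c : Fin n, ind (R c)
      = ind (i = x ∧ W) * ∑ c : Fin n, ind (R c) := by
    intro i
    rw [← Finset.sum_mul]
    congr 1
    rw [Finset.sum_congr rfl fun j _ => ind_congr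
      (show (i = x ∧ j = y ∧ W) ↔ (j = y ∧ (i = x ∧ W)) by tauto)]
    exact sum_ind_eq y _
  rw [Finset.sum_congr rfl fun i _ => h2 i, ← Finset.sum_mul]
  congr 1
  exact sum_ind_eq x _

lemma M_H2 {x z : Fin n} {W : Prop} {R : Fin n → Prop} {P : Fin n → Fin n → Fin n → Prop}
    (h : ∀ i j c, P i j c ↔ (i = x ∧ c = z ∧ W ∧ R j)) :
    ∑ i : Fin n, ∑ j : Fin n, ∑ c : Fin n, ind (P i j c)
      = ind W * ∑ j : Fin n, ind (R j) := by
  rw [sum3_congr fun i j c => ind_congr (h i j c)]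
  have h1 : ∀ i j : Fin n, ∑ c : Fin n, ind (i = x ∧ c = z ∧ W ∧ R j)
      = ind (i = x ∧ W ∧ R j) := by
    intro i j
    rw [Finset.sum_congr rfl fun c _ => ind_congr
      (show (i = x ∧ c = z ∧ W ∧ R j) ↔ (c = z ∧ (i = x ∧ W ∧ R j)) by tauto)]
    exact sum_ind_eq z _
  rw [Finset.sum_congr rfl fun i _ => Finset.sum_congr rfl fun j _ => h1 i j]
  have h2 : ∀ i : Fin n, ∑ j : Fin n, ind (i = x ∧ W ∧ R j)
      = ind (i = x ∧ W) * ∑ j : Fin n, ind (R j) := by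
    intro i
    rw [Finset.sum_congr rfl fun j _ => ind_congr
      (show (i = x ∧ W ∧ R j) ↔ ((i = x ∧ W) ∧ R j) by tauto)]
    exact sum_ind_and _ _
  rw [Finset.sum_congr rfl fun i _ => h2 i, ← Finset.sum_mul]
  congr 1
  exact sum_ind_eq x _

lemma M_H3 {y z : Fin n} {W : Prop} {R : Fin n → Prop} {P : Fin n → Fin n → Fin n → Prop}
    (h : ∀ i j c, P i j c ↔ (j = y ∧ c = z ∧ W ∧ R i)) :
    ∑ i : Fin n, ∑ j : Fin n, ∑ c : Fin n, ind (P i j c)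
      = ind W * ∑ i : Fin n, ind (R i) := by
  rw [sum3_congr fun i j c => ind_congr (h i j c)]
  have h1 : ∀ i j : Fin n, ∑ c : Fin n, ind (j = y ∧ c = z ∧ W ∧ R i)
      = ind (j = y ∧ W ∧ R i) := by
    intro i j
    rw [Finset.sum_congr rfl fun c _ => ind_congr
      (show (j = y ∧ c = z ∧ W ∧ R i) ↔ (c = z ∧ (j = y ∧ W ∧ R i)) by tauto)]
    exact sum_ind_eq z _
  rw [Finset.sum_congr rfl fun i _ => Finset.sum_congr rfl fun j _ => h1 i j]
  have h2 : ∀ i : Fin n, ∑ j : Fin n, ind (j = y ∧ W ∧ R i) = ind (W ∧ R i) := by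
    intro i
    exact sum_ind_eq y _
  rw [Finset.sum_congr rfl fun i _ => h2 i]
  rw [Finset.sum_congr rfl fun i _ => ind_congr
    (show (W ∧ R i) ↔ (W ∧ R i) from Iff.rfl)]
  rw [sum_ind_and]
end Collapse

section Counts
variable {n : ℕ}

lemma cntR1 {a b : Fin n} (h : a ≠ b) :
    ∑ c : Fin n, ind (c ≠ a ∧ c ≠ b) = (n : ℝ) - 2 := by
  rw [cnt_ne_ne h]
  have ha := a.isLt; have hb := b.isLt
  have h2 : 2 ≤ n := by omega
  push_cast [Nat.cast_sub h2]
  ring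

lemma cntR2 {a b : Fin n} (h : a < b) :
    ∑ j : Fin n, ind (a < j ∧ j ≠ b) = (n : ℝ) - 2 - (a : ℕ) := by
  rw [cnt_Ioi_ne h]
  have hb := b.isLt
  have h2 : (a : ℕ) + 2 ≤ n := by omega
  have : (n : ℕ) - 2 - (a : ℕ) = n - (2 + (a:ℕ)) := by omega
  rw [this, Nat.cast_sub (by omega)]
  push_cast; ring

lemma cntR3 {a b : Fin n} (h : a < b) :
    ∑ j : Fin n, ind (b < j ∧ j ≠ a) = (n : ℝ) - 1 - (b : ℕ) := by
  rw [cnt_Ioi_ne' h]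
  have hb := b.isLt
  have : (n : ℕ) - 1 - (b : ℕ) = n - (1 + (b:ℕ)) := by omega
  rw [this, Nat.cast_sub (by omega)]
  push_cast; ring

lemma cntR4 {a b : Fin n} (h : a < b) :
    ∑ i : Fin n, ind (i < a ∧ i ≠ b) = ((a : ℕ) : ℝ) := cnt_Iio_ne' h

lemma cntR5 {a b : Fin n} (h : a < b) :
    ∑ i : Fin n, ind (i < b ∧ i ≠ a) = ((b : ℕ) : ℝ) - 1 := by
  rw [cnt_Iio_ne h]
  have h1 : 1 ≤ (b : ℕ) := by omega
  rw [Nat.cast_sub h1]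
  push_cast; ring

lemma cnt_Ioi' (x : Fin n) :
    ∑ j : Fin n, ind (x < j) = ((n - 1 - (x : ℕ) : ℕ) : ℝ) := by
  classical
  rw [sum_ind_card]
  congr 1
  have : Finset.univ.filter (fun j : Fin n => x < j) = Finset.Ioi x := by
    ext j; simp
  rw [this, Fin.card_Ioi]

lemma cnt_Iio' (x : Fin n) :
    ∑ i : Fin n, ind (i < x) = ((x : ℕ) : ℝ) := by
  classical
  rw [sum_ind_card]
  congr 1
  have : Finset.univ.filter (fun i : Fin n => i < x) = Finset.Iio x := by
    ext i; simp
  rw [this, Fin.card_Iio]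
end Counts

lemma eval_charpoly {m : Type*} [Fintype m] [DecidableEq m] (M : Matrix m m ℝ) (t : ℝ) :
    (M.charpoly).eval t = (t • (1 : Matrix m m ℝ) - M).det := by
  rw [Matrix.charpoly, ← Polynomial.coe_evalRingHom, RingHom.map_det]
  congr 1
  ext i j
  by_cases h : i = j
  · subst h; simp [Matrix.charmatrix_apply_eq, Matrix.one_apply]
  · simp [Matrix.charmatrix_apply_ne _ _ _ h, Matrix.one_apply_ne h]

lemma card_Idx (n : ℕ) : Fintype.card (Idx n) = n * (n-1) / 2 := by
  rw [Fintype.card_subtype]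
  have hIoi : ∀ i : Fin n, (Finset.univ.filter fun j => i < j) = Finset.Ioi i := by
    intro i; ext j; simp
  calc (Finset.univ.filter fun p : Fin n × Fin n => p.1 < p.2).card
      = ∑ p : Fin n × Fin n, if p.1 < p.2 then 1 else 0 := by
        rw [Finset.card_filter]
    _ = ∑ i : Fin n, ∑ j : Fin n, if i < j then 1 else 0 := by
        rw [Fintype.sum_prod_type]
    _ = ∑ i : Fin n, (Finset.Ioi i).card := by
        refine Finset.sum_congr rfl fun i _ => ?_
        rw [← hIoi i, Finset.card_filter]
    _ = ∑ i : Fin n, (n - 1 - (i:ℕ)) := by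
        simp [Fin.card_Ioi]
    _ = ∑ i ∈ Finset.range n, (n - 1 - i) := by
        rw [Fin.sum_univ_eq_sum_range]
    _ = ∑ i ∈ Finset.range n, i := by
        rw [← Finset.sum_range_reflect]
        refine Finset.sum_congr rfl fun i hi => ?_
        simp at hi; omega
    _ = n * (n-1) / 2 := Finset.sum_range_id n

section Entry
variable {n : ℕ}

lemma ite_to_ind (G : Fin n → Fin n → Fin n → ℝ) :
    (∑ i : Fin n, ∑ j : Fin n, if i < j then
        (∑ c : Fin n, if c ≠ i ∧ c ≠ j then G i j c else 0) else 0)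
    = ∑ i : Fin n, ∑ j : Fin n, ∑ c : Fin n,
        ind (i < j) * (ind (c ≠ i ∧ c ≠ j) * G i j c) := by
  refine Finset.sum_congr rfl fun i _ => Finset.sum_congr rfl fun j _ => ?_
  by_cases hij : i < j
  · rw [if_pos hij]
    refine Finset.sum_congr rfl fun c _ => ?_
    by_cases hc : c ≠ i ∧ c ≠ j
    · rw [if_pos hc, ind_true hij, ind_true hc, one_mul, one_mul]
    · rw [if_neg hc, ind_false hc, zero_mul, mul_zero]
  · rw [if_neg hij]
    symm
    refine Finset.sum_eq_zero fun c _ => ?_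
    rw [ind_false hij, zero_mul]

lemma final_identity (hn : 3 ≤ n) (a b d e : Fin n) (hab : a < b) (hde : d < e) :
    (ind (d = a ∧ e = b) * ((n:ℝ) - 2)
      - ind (d = a ∧ e ≠ a ∧ e ≠ b)
      - ind (e = a ∧ d ≠ a ∧ d ≠ b)
      - ind (d = b ∧ e ≠ a ∧ e ≠ b)
      - ind (e = b ∧ d ≠ a ∧ d ≠ b)
      - ind (d = a ∧ a < e ∧ b ≠ e)
      + ind (d = a ∧ e = b) * ((n:ℝ) - 2 - ((a:ℕ):ℝ))
      + ind (e = a ∧ d = b) * ((n:ℝ) - 2 - ((a:ℕ):ℝ))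
      + ind (e = b ∧ a < d)
      + ind (d = b)
      - ind (d = b ∧ b < e ∧ a ≠ e)
      + ind (d = b ∧ e = a) * ((n:ℝ) - 1 - ((b:ℕ):ℝ))
      + ind (e = b ∧ d = a) * ((n:ℝ) - 1 - ((b:ℕ):ℝ))
      + ind (e = a ∧ b < d)
      + ind (d = a ∧ b < e)
      - ind (e = a ∧ d < a ∧ b ≠ d)
      + ind (e = b ∧ d < a)
      + ind (d = b ∧ e < a)
      + ind (d = a ∧ e = b) * ((a:ℕ):ℝ)
      + ind (e = a ∧ d = b) * ((a:ℕ):ℝ)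
      - ind (e = b ∧ d < b ∧ a ≠ d)
      + ind (e = a ∧ d < b)
      + ind (d = a ∧ e < b)
      + ind (d = b ∧ e = a) * (((b:ℕ):ℝ) - 1)
      + ind (e = b ∧ d = a) * (((b:ℕ):ℝ) - 1))
    = (3*(n:ℝ) - 4) * ind (a = d ∧ b = e)
      - (ind (a = d) + ind (a = e) + ind (b = d) + ind (b = e)) := by
  rw [ind_congr (show (d = a ∧ e = b) ↔ (a = d ∧ b = e) from by omega),
      ind_congr (show (d = a ∧ e ≠ a ∧ e ≠ b) ↔ (a = d ∧ ¬ b = e) from by omega),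
      ind_congr (show (e = a ∧ d ≠ a ∧ d ≠ b) ↔ (a = e) from by omega),
      ind_congr (show (d = b ∧ e ≠ a ∧ e ≠ b) ↔ (b = d) from by omega),
      ind_congr (show (e = b ∧ d ≠ a ∧ d ≠ b) ↔ (b = e ∧ ¬ a = d) from by omega),
      ind_congr (show (d = a ∧ a < e ∧ b ≠ e) ↔ (a = d ∧ ¬ b = e) from by omega),
      ind_false (show ¬ (e = a ∧ d = b) from by omega),
      ind_congr (show (e = b ∧ a < d) ↔ (b = e ∧ a < d) from by omega),
      ind_congr (show (d = b) ↔ (b = d) from by omega),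
      ind_congr (show (d = b ∧ b < e ∧ a ≠ e) ↔ (b = d) from by omega),
      ind_false (show ¬ (d = b ∧ e = a) from by omega),
      ind_congr (show (e = b ∧ d = a) ↔ (a = d ∧ b = e) from by omega),
      ind_false (show ¬ (e = a ∧ b < d) from by omega),
      ind_congr (show (d = a ∧ b < e) ↔ (a = d ∧ b < e) from by omega),
      ind_congr (show (e = a ∧ d < a ∧ b ≠ d) ↔ (a = e) from by omega),
      ind_congr (show (e = b ∧ d < a) ↔ (b = e ∧ d < a) from by omega),
      ind_false (show ¬ (d = b ∧ e < a) from by omega),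
      ind_congr (show (e = a ∧ d < b) ↔ (a = e) from by omega),
      ind_congr (show (d = a ∧ e < b) ↔ (a = d ∧ e < b) from by omega),
      ind_congr (show (e = b ∧ d < b ∧ a ≠ d) ↔ (b = e ∧ ¬ a = d) from by omega)]
  have hsplit1 : ind (a = d) = ind (a = d ∧ b = e) + ind (a = d ∧ ¬ b = e) := by
    rw [← ind_or (by omega)]; exact ind_congr (by tauto)
  have hsplit2 : ind (b = e) = ind (a = d ∧ b = e) + ind (b = e ∧ ¬ a = d) := by
    rw [← ind_or (by omega)]; exact ind_congr (by omega)
  have hsplit3 : ind (a = d ∧ ¬ b = e) = ind (a = d ∧ b < e) + ind (a = d ∧ e < b) := by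
    rw [← ind_or (by omega)]; exact ind_congr (by omega)
  have hsplit4 : ind (b = e ∧ ¬ a = d) = ind (b = e ∧ a < d) + ind (b = e ∧ d < a) := by
    rw [← ind_or (by omega)]; exact ind_congr (by omega)
  have hab2 : ((a:ℕ):ℝ) + 1 ≤ ((b:ℕ):ℝ) := by exact_mod_cast hab
  rw [hsplit1, hsplit2, hsplit3, hsplit4]
  have h1 : ind (a = d ∧ b = e) * (((a:ℕ):ℝ) - ((a:ℕ):ℝ)) = 0 := by ring
  ring

set_option maxHeartbeats 2000000 in
lemma AtA_entry (hn : 3 ≤ n) (a b d e : Fin n) (hab : a < b) (hde : d < e) :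
    ((Amat n)ᵀ * Amat n) ⟨(a,b),hab⟩ ⟨(d,e),hde⟩
      = (3*(n:ℝ) - 4) * ind (a = d ∧ b = e)
        - (ind (a = d) + ind (a = e) + ind (b = d) + ind (b = e)) := by
  have hab' : a ≠ b := ne_of_lt hab
  have hde' : d ≠ e := ne_of_lt hde
  have factor : ∀ (x y : Fin n) (hxy : x < y) (q : Row n),
      Amat n q ⟨(x,y),hxy⟩
        = ind (q.1.1.1.1 = x ∧ q.1.1.1.2 = y)
          - ind ((q.1.1.1.1 = x ∧ q.1.2 = y) ∨ (q.1.1.1.1 = y ∧ q.1.2 = x))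
          - ind ((q.1.1.1.2 = x ∧ q.1.2 = y) ∨ (q.1.1.1.2 = y ∧ q.1.2 = x)) := by
    intro x y hxy q
    have hij : q.1.1.1.1 < q.1.1.1.2 := q.1.1.2
    have hci : q.1.2 ≠ q.1.1.1.1 := q.2.1
    have hcj : q.1.2 ≠ q.1.1.1.2 := q.2.2
    show (if (⟨(x,y),hxy⟩ : Idx n) = q.1.1 then (1:ℝ)
      else if ({x, y} : Finset (Fin n)) = {q.1.1.1.1, q.1.2} ∨
              ({x, y} : Finset (Fin n)) = {q.1.1.1.2, q.1.2} then -1 else 0) = _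
    simp only [show ((⟨(x,y),hxy⟩ : Idx n) = q.1.1) ↔ (q.1.1.1.1 = x ∧ q.1.1.1.2 = y) from
        (by rw [Subtype.ext_iff, Prod.ext_iff]; dsimp only; omega),
      show (({x, y} : Finset (Fin n)) = {q.1.1.1.1, q.1.2}) ↔
           ((q.1.1.1.1 = x ∧ q.1.2 = y) ∨ (q.1.1.1.1 = y ∧ q.1.2 = x)) from
        (by rw [pair_eq_s16 (ne_of_lt hxy)]; omega),
      show (({x, y} : Finset (Fin n)) = {q.1.1.1.2, q.1.2}) ↔
           ((q.1.1.1.2 = x ∧ q.1.2 = y) ∨ (q.1.1.1.2 = y ∧ q.1.2 = x)) from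
        (by rw [pair_eq_s16 (ne_of_lt hxy)]; omega)]
    split_ifs with h1 h2
    · rw [ind_true h1, ind_false (by omega), ind_false (by omega)]; ring
    · rcases h2 with h | h
      · rw [ind_false h1, ind_true h, ind_false (by omega)]; ring
      · rw [ind_false h1, ind_false (by omega), ind_true h]; ring
    · rw [ind_false h1, ind_false (fun hh => h2 (Or.inl hh)),
        ind_false (fun hh => h2 (Or.inr hh))]; ring
  rw [Matrix.mul_apply]
  simp only [Matrix.transpose_apply]
  calc
    ∑ q : Row n, Amat n q ⟨(a,b),hab⟩ * Amat n q ⟨(d,e),hde⟩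
      = ∑ q : Row n, (fun p : Idx n × Fin n =>
          (ind (p.1.1.1 = a ∧ p.1.1.2 = b)
            - ind ((p.1.1.1 = a ∧ p.2 = b) ∨ (p.1.1.1 = b ∧ p.2 = a))
            - ind ((p.1.1.2 = a ∧ p.2 = b) ∨ (p.1.1.2 = b ∧ p.2 = a))) *
          (ind (p.1.1.1 = d ∧ p.1.1.2 = e)
            - ind ((p.1.1.1 = d ∧ p.2 = e) ∨ (p.1.1.1 = e ∧ p.2 = d))
            - ind ((p.1.1.2 = d ∧ p.2 = e) ∨ (p.1.1.2 = e ∧ p.2 = d)))) q.1 := by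
        refine Finset.sum_congr rfl fun q _ => ?_
        rw [factor a b hab q, factor d e hde q]
    _ = ∑ β : Idx n, ∑ c : Fin n, if c ≠ β.1.1 ∧ c ≠ β.1.2 then
          (fun p : Idx n × Fin n =>
          (ind (p.1.1.1 = a ∧ p.1.1.2 = b)
            - ind ((p.1.1.1 = a ∧ p.2 = b) ∨ (p.1.1.1 = b ∧ p.2 = a))
            - ind ((p.1.1.2 = a ∧ p.2 = b) ∨ (p.1.1.2 = b ∧ p.2 = a))) *
          (ind (p.1.1.1 = d ∧ p.1.1.2 = e)
            - ind ((p.1.1.1 = d ∧ p.2 = e) ∨ (p.1.1.1 = e ∧ p.2 = d))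
            - ind ((p.1.1.2 = d ∧ p.2 = e) ∨ (p.1.1.2 = e ∧ p.2 = d)))) (β, c) else 0 :=
        row_sum
        (fun p : Idx n × Fin n =>
          (ind (p.1.1.1 = a ∧ p.1.1.2 = b)
            - ind ((p.1.1.1 = a ∧ p.2 = b) ∨ (p.1.1.1 = b ∧ p.2 = a))
            - ind ((p.1.1.2 = a ∧ p.2 = b) ∨ (p.1.1.2 = b ∧ p.2 = a))) *
          (ind (p.1.1.1 = d ∧ p.1.1.2 = e)
            - ind ((p.1.1.1 = d ∧ p.2 = e) ∨ (p.1.1.1 = e ∧ p.2 = d))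
            - ind ((p.1.1.2 = d ∧ p.2 = e) ∨ (p.1.1.2 = e ∧ p.2 = d))))
    _ = ∑ i : Fin n, ∑ j : Fin n, if i < j then
          ((fun p : Fin n × Fin n => ∑ c : Fin n, if c ≠ p.1 ∧ c ≠ p.2 then
          (ind (p.1 = a ∧ p.2 = b)
            - ind ((p.1 = a ∧ c = b) ∨ (p.1 = b ∧ c = a))
            - ind ((p.2 = a ∧ c = b) ∨ (p.2 = b ∧ c = a))) *
          (ind (p.1 = d ∧ p.2 = e)
            - ind ((p.1 = d ∧ c = e) ∨ (p.1 = e ∧ c = d))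
            - ind ((p.2 = d ∧ c = e) ∨ (p.2 = e ∧ c = d))) else 0) (i, j)) else 0 :=
        idx_sum
        (fun p : Fin n × Fin n => ∑ c : Fin n, if c ≠ p.1 ∧ c ≠ p.2 then
          (ind (p.1 = a ∧ p.2 = b)
            - ind ((p.1 = a ∧ c = b) ∨ (p.1 = b ∧ c = a))
            - ind ((p.2 = a ∧ c = b) ∨ (p.2 = b ∧ c = a))) *
          (ind (p.1 = d ∧ p.2 = e)
            - ind ((p.1 = d ∧ c = e) ∨ (p.1 = e ∧ c = d))
            - ind ((p.2 = d ∧ c = e) ∨ (p.2 = e ∧ c = d))) else 0)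
    _ = ∑ i : Fin n, ∑ j : Fin n, ∑ c : Fin n,
          ind (i < j) * (ind (c ≠ i ∧ c ≠ j) *
          ((ind (i = a ∧ j = b)
            - ind ((i = a ∧ c = b) ∨ (i = b ∧ c = a))
            - ind ((j = a ∧ c = b) ∨ (j = b ∧ c = a))) *
          (ind (i = d ∧ j = e)
            - ind ((i = d ∧ c = e) ∨ (i = e ∧ c = d))
            - ind ((j = d ∧ c = e) ∨ (j = e ∧ c = d))))) := by
        exact ite_to_ind (fun i j c =>
          (ind (i = a ∧ j = b)
            - ind ((i = a ∧ c = b) ∨ (i = b ∧ c = a))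
            - ind ((j = a ∧ c = b) ∨ (j = b ∧ c = a))) *
          (ind (i = d ∧ j = e)
            - ind ((i = d ∧ c = e) ∨ (i = e ∧ c = d))
            - ind ((j = d ∧ c = e) ∨ (j = e ∧ c = d))))
    _ = ∑ i : Fin n, ∑ j : Fin n, ∑ c : Fin n,
          (ind ((i < j ∧ c ≠ i ∧ c ≠ j) ∧ (i = a ∧ j = b) ∧ (i = d ∧ j = e))
      - ind ((i < j ∧ c ≠ i ∧ c ≠ j) ∧ (i = a ∧ j = b) ∧ (i = d ∧ c = e))
      - ind ((i < j ∧ c ≠ i ∧ c ≠ j) ∧ (i = a ∧ j = b) ∧ (i = e ∧ c = d))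
      - ind ((i < j ∧ c ≠ i ∧ c ≠ j) ∧ (i = a ∧ j = b) ∧ (j = d ∧ c = e))
      - ind ((i < j ∧ c ≠ i ∧ c ≠ j) ∧ (i = a ∧ j = b) ∧ (j = e ∧ c = d))
      - ind ((i < j ∧ c ≠ i ∧ c ≠ j) ∧ (i = a ∧ c = b) ∧ (i = d ∧ j = e))
      + ind ((i < j ∧ c ≠ i ∧ c ≠ j) ∧ (i = a ∧ c = b) ∧ (i = d ∧ c = e))
      + ind ((i < j ∧ c ≠ i ∧ c ≠ j) ∧ (i = a ∧ c = b) ∧ (i = e ∧ c = d))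
      + ind ((i < j ∧ c ≠ i ∧ c ≠ j) ∧ (i = a ∧ c = b) ∧ (j = d ∧ c = e))
      + ind ((i < j ∧ c ≠ i ∧ c ≠ j) ∧ (i = a ∧ c = b) ∧ (j = e ∧ c = d))
      - ind ((i < j ∧ c ≠ i ∧ c ≠ j) ∧ (i = b ∧ c = a) ∧ (i = d ∧ j = e))
      + ind ((i < j ∧ c ≠ i ∧ c ≠ j) ∧ (i = b ∧ c = a) ∧ (i = d ∧ c = e))
      + ind ((i < j ∧ c ≠ i ∧ c ≠ j) ∧ (i = b ∧ c = a) ∧ (i = e ∧ c = d))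
      + ind ((i < j ∧ c ≠ i ∧ c ≠ j) ∧ (i = b ∧ c = a) ∧ (j = d ∧ c = e))
      + ind ((i < j ∧ c ≠ i ∧ c ≠ j) ∧ (i = b ∧ c = a) ∧ (j = e ∧ c = d))
      - ind ((i < j ∧ c ≠ i ∧ c ≠ j) ∧ (j = a ∧ c = b) ∧ (i = d ∧ j = e))
      + ind ((i < j ∧ c ≠ i ∧ c ≠ j) ∧ (j = a ∧ c = b) ∧ (i = d ∧ c = e))
      + ind ((i < j ∧ c ≠ i ∧ c ≠ j) ∧ (j = a ∧ c = b) ∧ (i = e ∧ c = d))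
      + ind ((i < j ∧ c ≠ i ∧ c ≠ j) ∧ (j = a ∧ c = b) ∧ (j = d ∧ c = e))
      + ind ((i < j ∧ c ≠ i ∧ c ≠ j) ∧ (j = a ∧ c = b) ∧ (j = e ∧ c = d))
      - ind ((i < j ∧ c ≠ i ∧ c ≠ j) ∧ (j = b ∧ c = a) ∧ (i = d ∧ j = e))
      + ind ((i < j ∧ c ≠ i ∧ c ≠ j) ∧ (j = b ∧ c = a) ∧ (i = d ∧ c = e))
      + ind ((i < j ∧ c ≠ i ∧ c ≠ j) ∧ (j = b ∧ c = a) ∧ (i = e ∧ c = d))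
      + ind ((i < j ∧ c ≠ i ∧ c ≠ j) ∧ (j = b ∧ c = a) ∧ (j = d ∧ c = e))
      + ind ((i < j ∧ c ≠ i ∧ c ≠ j) ∧ (j = b ∧ c = a) ∧ (j = e ∧ c = d))) := by
        refine sum3_congr fun i j c => ?_
        rw [ind_or (show ¬((i = a ∧ c = b) ∧ (i = b ∧ c = a)) by omega),
            ind_or (show ¬((j = a ∧ c = b) ∧ (j = b ∧ c = a)) by omega),
            ind_or (show ¬((i = d ∧ c = e) ∧ (i = e ∧ c = d)) by omega),
            ind_or (show ¬((j = d ∧ c = e) ∧ (j = e ∧ c = d)) by omega)]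
        simp only [← ind_mul]
        ring
    _ = ∑ i : Fin n, ∑ j : Fin n, ∑ c : Fin n, ind ((i < j ∧ c ≠ i ∧ c ≠ j) ∧ (i = a ∧ j = b) ∧ (i = d ∧ j = e))
      - ∑ i : Fin n, ∑ j : Fin n, ∑ c : Fin n, ind ((i < j ∧ c ≠ i ∧ c ≠ j) ∧ (i = a ∧ j = b) ∧ (i = d ∧ c = e))
      - ∑ i : Fin n, ∑ j : Fin n, ∑ c : Fin n, ind ((i < j ∧ c ≠ i ∧ c ≠ j) ∧ (i = a ∧ j = b) ∧ (i = e ∧ c = d))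
      - ∑ i : Fin n, ∑ j : Fin n, ∑ c : Fin n, ind ((i < j ∧ c ≠ i ∧ c ≠ j) ∧ (i = a ∧ j = b) ∧ (j = d ∧ c = e))
      - ∑ i : Fin n, ∑ j : Fin n, ∑ c : Fin n, ind ((i < j ∧ c ≠ i ∧ c ≠ j) ∧ (i = a ∧ j = b) ∧ (j = e ∧ c = d))
      - ∑ i : Fin n, ∑ j : Fin n, ∑ c : Fin n, ind ((i < j ∧ c ≠ i ∧ c ≠ j) ∧ (i = a ∧ c = b) ∧ (i = d ∧ j = e))
      + ∑ i : Fin n, ∑ j : Fin n, ∑ c : Fin n, ind ((i < j ∧ c ≠ i ∧ c ≠ j) ∧ (i = a ∧ c = b) ∧ (i = d ∧ c = e))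
      + ∑ i : Fin n, ∑ j : Fin n, ∑ c : Fin n, ind ((i < j ∧ c ≠ i ∧ c ≠ j) ∧ (i = a ∧ c = b) ∧ (i = e ∧ c = d))
      + ∑ i : Fin n, ∑ j : Fin n, ∑ c : Fin n, ind ((i < j ∧ c ≠ i ∧ c ≠ j) ∧ (i = a ∧ c = b) ∧ (j = d ∧ c = e))
      + ∑ i : Fin n, ∑ j : Fin n, ∑ c : Fin n, ind ((i < j ∧ c ≠ i ∧ c ≠ j) ∧ (i = a ∧ c = b) ∧ (j = e ∧ c = d))
      - ∑ i : Fin n, ∑ j : Fin n, ∑ c : Fin n, ind ((i < j ∧ c ≠ i ∧ c ≠ j) ∧ (i = b ∧ c = a) ∧ (i = d ∧ j = e))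
      + ∑ i : Fin n, ∑ j : Fin n, ∑ c : Fin n, ind ((i < j ∧ c ≠ i ∧ c ≠ j) ∧ (i = b ∧ c = a) ∧ (i = d ∧ c = e))
      + ∑ i : Fin n, ∑ j : Fin n, ∑ c : Fin n, ind ((i < j ∧ c ≠ i ∧ c ≠ j) ∧ (i = b ∧ c = a) ∧ (i = e ∧ c = d))
      + ∑ i : Fin n, ∑ j : Fin n, ∑ c : Fin n, ind ((i < j ∧ c ≠ i ∧ c ≠ j) ∧ (i = b ∧ c = a) ∧ (j = d ∧ c = e))
      + ∑ i : Fin n, ∑ j : Fin n, ∑ c : Fin n, ind ((i < j ∧ c ≠ i ∧ c ≠ j) ∧ (i = b ∧ c = a) ∧ (j = e ∧ c = d))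
      - ∑ i : Fin n, ∑ j : Fin n, ∑ c : Fin n, ind ((i < j ∧ c ≠ i ∧ c ≠ j) ∧ (j = a ∧ c = b) ∧ (i = d ∧ j = e))
      + ∑ i : Fin n, ∑ j : Fin n, ∑ c : Fin n, ind ((i < j ∧ c ≠ i ∧ c ≠ j) ∧ (j = a ∧ c = b) ∧ (i = d ∧ c = e))
      + ∑ i : Fin n, ∑ j : Fin n, ∑ c : Fin n, ind ((i < j ∧ c ≠ i ∧ c ≠ j) ∧ (j = a ∧ c = b) ∧ (i = e ∧ c = d))
      + ∑ i : Fin n, ∑ j : Fin n, ∑ c : Fin n, ind ((i < j ∧ c ≠ i ∧ c ≠ j) ∧ (j = a ∧ c = b) ∧ (j = d ∧ c = e))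
      + ∑ i : Fin n, ∑ j : Fin n, ∑ c : Fin n, ind ((i < j ∧ c ≠ i ∧ c ≠ j) ∧ (j = a ∧ c = b) ∧ (j = e ∧ c = d))
      - ∑ i : Fin n, ∑ j : Fin n, ∑ c : Fin n, ind ((i < j ∧ c ≠ i ∧ c ≠ j) ∧ (j = b ∧ c = a) ∧ (i = d ∧ j = e))
      + ∑ i : Fin n, ∑ j : Fin n, ∑ c : Fin n, ind ((i < j ∧ c ≠ i ∧ c ≠ j) ∧ (j = b ∧ c = a) ∧ (i = d ∧ c = e))
      + ∑ i : Fin n, ∑ j : Fin n, ∑ c : Fin n, ind ((i < j ∧ c ≠ i ∧ c ≠ j) ∧ (j = b ∧ c = a) ∧ (i = e ∧ c = d))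
      + ∑ i : Fin n, ∑ j : Fin n, ∑ c : Fin n, ind ((i < j ∧ c ≠ i ∧ c ≠ j) ∧ (j = b ∧ c = a) ∧ (j = d ∧ c = e))
      + ∑ i : Fin n, ∑ j : Fin n, ∑ c : Fin n, ind ((i < j ∧ c ≠ i ∧ c ≠ j) ∧ (j = b ∧ c = a) ∧ (j = e ∧ c = d)) := by
        simp only [Finset.sum_add_distrib, Finset.sum_sub_distrib]
    _ = (3*(n:ℝ) - 4) * ind (a = d ∧ b = e)
        - (ind (a = d) + ind (a = e) + ind (b = d) + ind (b = e)) := by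
        have M1 : ∑ i : Fin n, ∑ j : Fin n, ∑ c : Fin n, ind ((i < j ∧ c ≠ i ∧ c ≠ j) ∧ (i = a ∧ j = b) ∧ (i = d ∧ j = e)) = ind (d = a ∧ e = b) * ((n:ℝ) - 2) := by
          rw [M_H1 (x := a) (y := b) (W := d = a ∧ e = b) (R := fun c => c ≠ a ∧ c ≠ b) (fun i j c => by omega), cntR1 (ne_of_lt hab)]
        have M2 : ∑ i : Fin n, ∑ j : Fin n, ∑ c : Fin n, ind ((i < j ∧ c ≠ i ∧ c ≠ j) ∧ (i = a ∧ j = b) ∧ (i = d ∧ c = e)) = ind (d = a ∧ e ≠ a ∧ e ≠ b) := by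
          exact M_H0 (x := a) (y := b) (z := e) (W := d = a ∧ e ≠ a ∧ e ≠ b) (fun i j c => by omega)
        have M3 : ∑ i : Fin n, ∑ j : Fin n, ∑ c : Fin n, ind ((i < j ∧ c ≠ i ∧ c ≠ j) ∧ (i = a ∧ j = b) ∧ (i = e ∧ c = d)) = ind (e = a ∧ d ≠ a ∧ d ≠ b) := by
          exact M_H0 (x := a) (y := b) (z := d) (W := e = a ∧ d ≠ a ∧ d ≠ b) (fun i j c => by omega)
        have M4 : ∑ i : Fin n, ∑ j : Fin n, ∑ c : Fin n, ind ((i < j ∧ c ≠ i ∧ c ≠ j) ∧ (i = a ∧ j = b) ∧ (j = d ∧ c = e)) = ind (d = b ∧ e ≠ a ∧ e ≠ b) := by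
          exact M_H0 (x := a) (y := b) (z := e) (W := d = b ∧ e ≠ a ∧ e ≠ b) (fun i j c => by omega)
        have M5 : ∑ i : Fin n, ∑ j : Fin n, ∑ c : Fin n, ind ((i < j ∧ c ≠ i ∧ c ≠ j) ∧ (i = a ∧ j = b) ∧ (j = e ∧ c = d)) = ind (e = b ∧ d ≠ a ∧ d ≠ b) := by
          exact M_H0 (x := a) (y := b) (z := d) (W := e = b ∧ d ≠ a ∧ d ≠ b) (fun i j c => by omega)
        have M6 : ∑ i : Fin n, ∑ j : Fin n, ∑ c : Fin n, ind ((i < j ∧ c ≠ i ∧ c ≠ j) ∧ (i = a ∧ c = b) ∧ (i = d ∧ j = e)) = ind (d = a ∧ a < e ∧ b ≠ e) := by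
          exact M_H0 (x := a) (y := e) (z := b) (W := d = a ∧ a < e ∧ b ≠ e) (fun i j c => by omega)
        have M7 : ∑ i : Fin n, ∑ j : Fin n, ∑ c : Fin n, ind ((i < j ∧ c ≠ i ∧ c ≠ j) ∧ (i = a ∧ c = b) ∧ (i = d ∧ c = e)) = ind (d = a ∧ e = b) * ((n:ℝ) - 2 - ((a:ℕ):ℝ)) := by
          rw [M_H2 (x := a) (z := b) (W := d = a ∧ e = b) (R := fun j => a < j ∧ j ≠ b) (fun i j c => by omega), cntR2 hab]
        have M8 : ∑ i : Fin n, ∑ j : Fin n, ∑ c : Fin n, ind ((i < j ∧ c ≠ i ∧ c ≠ j) ∧ (i = a ∧ c = b) ∧ (i = e ∧ c = d)) = ind (e = a ∧ d = b) * ((n:ℝ) - 2 - ((a:ℕ):ℝ)) := by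
          rw [M_H2 (x := a) (z := b) (W := e = a ∧ d = b) (R := fun j => a < j ∧ j ≠ b) (fun i j c => by omega), cntR2 hab]
        have M9 : ∑ i : Fin n, ∑ j : Fin n, ∑ c : Fin n, ind ((i < j ∧ c ≠ i ∧ c ≠ j) ∧ (i = a ∧ c = b) ∧ (j = d ∧ c = e)) = ind (e = b ∧ a < d) := by
          exact M_H0 (x := a) (y := d) (z := b) (W := e = b ∧ a < d) (fun i j c => by omega)
        have M10 : ∑ i : Fin n, ∑ j : Fin n, ∑ c : Fin n, ind ((i < j ∧ c ≠ i ∧ c ≠ j) ∧ (i = a ∧ c = b) ∧ (j = e ∧ c = d)) = ind (d = b) := by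
          exact M_H0 (x := a) (y := e) (z := b) (W := d = b) (fun i j c => by omega)
        have M11 : ∑ i : Fin n, ∑ j : Fin n, ∑ c : Fin n, ind ((i < j ∧ c ≠ i ∧ c ≠ j) ∧ (i = b ∧ c = a) ∧ (i = d ∧ j = e)) = ind (d = b ∧ b < e ∧ a ≠ e) := by
          exact M_H0 (x := b) (y := e) (z := a) (W := d = b ∧ b < e ∧ a ≠ e) (fun i j c => by omega)
        have M12 : ∑ i : Fin n, ∑ j : Fin n, ∑ c : Fin n, ind ((i < j ∧ c ≠ i ∧ c ≠ j) ∧ (i = b ∧ c = a) ∧ (i = d ∧ c = e)) = ind (d = b ∧ e = a) * ((n:ℝ) - 1 - ((b:ℕ):ℝ)) := by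
          rw [M_H2 (x := b) (z := a) (W := d = b ∧ e = a) (R := fun j => b < j ∧ j ≠ a) (fun i j c => by omega), cntR3 hab]
        have M13 : ∑ i : Fin n, ∑ j : Fin n, ∑ c : Fin n, ind ((i < j ∧ c ≠ i ∧ c ≠ j) ∧ (i = b ∧ c = a) ∧ (i = e ∧ c = d)) = ind (e = b ∧ d = a) * ((n:ℝ) - 1 - ((b:ℕ):ℝ)) := by
          rw [M_H2 (x := b) (z := a) (W := e = b ∧ d = a) (R := fun j => b < j ∧ j ≠ a) (fun i j c => by omega), cntR3 hab]
        have M14 : ∑ i : Fin n, ∑ j : Fin n, ∑ c : Fin n, ind ((i < j ∧ c ≠ i ∧ c ≠ j) ∧ (i = b ∧ c = a) ∧ (j = d ∧ c = e)) = ind (e = a ∧ b < d) := by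
          exact M_H0 (x := b) (y := d) (z := a) (W := e = a ∧ b < d) (fun i j c => by omega)
        have M15 : ∑ i : Fin n, ∑ j : Fin n, ∑ c : Fin n, ind ((i < j ∧ c ≠ i ∧ c ≠ j) ∧ (i = b ∧ c = a) ∧ (j = e ∧ c = d)) = ind (d = a ∧ b < e) := by
          exact M_H0 (x := b) (y := e) (z := a) (W := d = a ∧ b < e) (fun i j c => by omega)
        have M16 : ∑ i : Fin n, ∑ j : Fin n, ∑ c : Fin n, ind ((i < j ∧ c ≠ i ∧ c ≠ j) ∧ (j = a ∧ c = b) ∧ (i = d ∧ j = e)) = ind (e = a ∧ d < a ∧ b ≠ d) := by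
          exact M_H0 (x := d) (y := a) (z := b) (W := e = a ∧ d < a ∧ b ≠ d) (fun i j c => by omega)
        have M17 : ∑ i : Fin n, ∑ j : Fin n, ∑ c : Fin n, ind ((i < j ∧ c ≠ i ∧ c ≠ j) ∧ (j = a ∧ c = b) ∧ (i = d ∧ c = e)) = ind (e = b ∧ d < a) := by
          exact M_H0 (x := d) (y := a) (z := b) (W := e = b ∧ d < a) (fun i j c => by omega)
        have M18 : ∑ i : Fin n, ∑ j : Fin n, ∑ c : Fin n, ind ((i < j ∧ c ≠ i ∧ c ≠ j) ∧ (j = a ∧ c = b) ∧ (i = e ∧ c = d)) = ind (d = b ∧ e < a) := by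
          exact M_H0 (x := e) (y := a) (z := b) (W := d = b ∧ e < a) (fun i j c => by omega)
        have M19 : ∑ i : Fin n, ∑ j : Fin n, ∑ c : Fin n, ind ((i < j ∧ c ≠ i ∧ c ≠ j) ∧ (j = a ∧ c = b) ∧ (j = d ∧ c = e)) = ind (d = a ∧ e = b) * ((a:ℕ):ℝ) := by
          rw [M_H3 (y := a) (z := b) (W := d = a ∧ e = b) (R := fun i => i < a ∧ i ≠ b) (fun i j c => by omega), cntR4 hab]
        have M20 : ∑ i : Fin n, ∑ j : Fin n, ∑ c : Fin n, ind ((i < j ∧ c ≠ i ∧ c ≠ j) ∧ (j = a ∧ c = b) ∧ (j = e ∧ c = d)) = ind (e = a ∧ d = b) * ((a:ℕ):ℝ) := by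
          rw [M_H3 (y := a) (z := b) (W := e = a ∧ d = b) (R := fun i => i < a ∧ i ≠ b) (fun i j c => by omega), cntR4 hab]
        have M21 : ∑ i : Fin n, ∑ j : Fin n, ∑ c : Fin n, ind ((i < j ∧ c ≠ i ∧ c ≠ j) ∧ (j = b ∧ c = a) ∧ (i = d ∧ j = e)) = ind (e = b ∧ d < b ∧ a ≠ d) := by
          exact M_H0 (x := d) (y := b) (z := a) (W := e = b ∧ d < b ∧ a ≠ d) (fun i j c => by omega)
        have M22 : ∑ i : Fin n, ∑ j : Fin n, ∑ c : Fin n, ind ((i < j ∧ c ≠ i ∧ c ≠ j) ∧ (j = b ∧ c = a) ∧ (i = d ∧ c = e)) = ind (e = a ∧ d < b) := by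
          exact M_H0 (x := d) (y := b) (z := a) (W := e = a ∧ d < b) (fun i j c => by omega)
        have M23 : ∑ i : Fin n, ∑ j : Fin n, ∑ c : Fin n, ind ((i < j ∧ c ≠ i ∧ c ≠ j) ∧ (j = b ∧ c = a) ∧ (i = e ∧ c = d)) = ind (d = a ∧ e < b) := by
          exact M_H0 (x := e) (y := b) (z := a) (W := d = a ∧ e < b) (fun i j c => by omega)
        have M24 : ∑ i : Fin n, ∑ j : Fin n, ∑ c : Fin n, ind ((i < j ∧ c ≠ i ∧ c ≠ j) ∧ (j = b ∧ c = a) ∧ (j = d ∧ c = e)) = ind (d = b ∧ e = a) * (((b:ℕ):ℝ) - 1) := by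
          rw [M_H3 (y := b) (z := a) (W := d = b ∧ e = a) (R := fun i => i < b ∧ i ≠ a) (fun i j c => by omega), cntR5 hab]
        have M25 : ∑ i : Fin n, ∑ j : Fin n, ∑ c : Fin n, ind ((i < j ∧ c ≠ i ∧ c ≠ j) ∧ (j = b ∧ c = a) ∧ (j = e ∧ c = d)) = ind (e = b ∧ d = a) * (((b:ℕ):ℝ) - 1) := by
          rw [M_H3 (y := b) (z := a) (W := e = b ∧ d = a) (R := fun i => i < b ∧ i ≠ a) (fun i j c => by omega), cntR5 hab]
        rw [M1, M2, M3, M4, M5, M6, M7, M8, M9, M10, M11, M12, M13, M14, M15, M16, M17, M18, M19, M20, M21, M22, M23, M24, M25]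
        exact final_identity hn a b d e hab hde
end Entry

noncomputable def Bmat (n : ℕ) : Matrix (Fin n) (Idx n) ℝ :=
  Matrix.of fun v γ => if v = γ.1.1 ∨ v = γ.1.2 then 1 else 0

noncomputable def onesCol (n : ℕ) : Matrix (Fin n) (Fin 1) ℝ :=
  Matrix.of fun _ _ => 1

section BLemmas
variable {n : ℕ}

lemma ite_ind (P : Prop) [Decidable P] : (if P then (1:ℝ) else 0) = ind P := by
  split_ifs with h
  · rw [ind_true h]
  · rw [ind_false h]

lemma sum_ind_single {α : Type*} [Fintype α] [DecidableEq α] (x : α) :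
    ∑ y : α, ind (y = x) = 1 := by
  rw [Finset.sum_congr rfl fun y _ => ind_congr (show (y = x) ↔ (y = x ∧ True) by tauto),
    sum_ind_eq x (fun _ => True), ind_true trivial]

lemma sum2_collapse {x y : Fin n} {W : Prop} {P : Fin n → Fin n → Prop}
    (h : ∀ i j, P i j ↔ (i = x ∧ j = y ∧ W)) :
    ∑ i : Fin n, ∑ j : Fin n, ind (P i j) = ind W := by
  have h1 : ∀ i : Fin n, ∑ j : Fin n, ind (P i j) = ind (i = x ∧ W) := by
    intro i
    rw [Finset.sum_congr rfl fun j _ => ind_congr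
      ((h i j).trans (show (i = x ∧ j = y ∧ W) ↔ (j = y ∧ (i = x ∧ W)) by tauto))]
    exact sum_ind_eq y _
  rw [Finset.sum_congr rfl fun i _ => h1 i]
  exact sum_ind_eq x _

lemma BtB_entry (hn : 3 ≤ n) (a b d e : Fin n) (hab : a < b) (hde : d < e) :
    ((Bmat n)ᵀ * Bmat n) ⟨(a,b),hab⟩ ⟨(d,e),hde⟩
      = ind (a = d) + ind (a = e) + ind (b = d) + ind (b = e) := by
  rw [Matrix.mul_apply]
  simp only [Matrix.transpose_apply]
  calc
    ∑ v : Fin n, Bmat n v ⟨(a,b),hab⟩ * Bmat n v ⟨(d,e),hde⟩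
      = ∑ v : Fin n, ind ((v = a ∧ (a = d ∨ a = e)) ∨ (v = b ∧ (b = d ∨ b = e))) := by
        refine Finset.sum_congr rfl fun v _ => ?_
        show (if v = a ∨ v = b then (1:ℝ) else 0) * (if v = d ∨ v = e then (1:ℝ) else 0) = _
        rw [ite_ind, ite_ind, ind_mul]
        exact ind_congr (by omega)
    _ = ∑ v : Fin n, (ind (v = a ∧ (a = d ∨ a = e)) + ind (v = b ∧ (b = d ∨ b = e))) := by
        refine Finset.sum_congr rfl fun v _ => ind_or (by omega)
    _ = ind (a = d ∨ a = e) + ind (b = d ∨ b = e) := by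
        rw [Finset.sum_add_distrib, sum_ind_eq a (fun _ => (a = d ∨ a = e)),
          sum_ind_eq b (fun _ => (b = d ∨ b = e))]
    _ = ind (a = d) + ind (a = e) + ind (b = d) + ind (b = e) := by
        rw [ind_or (by omega), ind_or (by omega)]; ring

lemma AtA_eq (hn : 3 ≤ n) :
    (Amat n)ᵀ * Amat n
      = (3*(n:ℝ) - 4) • (1 : Matrix (Idx n) (Idx n) ℝ) - (Bmat n)ᵀ * Bmat n := by
  ext γ δ
  obtain ⟨⟨a,b⟩,hab⟩ := γ
  obtain ⟨⟨d,e⟩,hde⟩ := δ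
  rw [AtA_entry hn a b d e hab hde, Matrix.sub_apply, Matrix.smul_apply,
    Matrix.one_apply, BtB_entry hn a b d e hab hde, ite_ind,
    ind_congr (show ((⟨(a,b),hab⟩ : Idx n) = ⟨(d,e),hde⟩) ↔ (a = d ∧ b = e) by
      rw [Subtype.ext_iff, Prod.ext_iff])]
  rw [smul_eq_mul]

lemma BBt_entry (hn : 3 ≤ n) (v w : Fin n) :
    (Bmat n * (Bmat n)ᵀ) v w
      = (((n:ℝ) - 2) • (1 : Matrix (Fin n) (Fin n) ℝ) + onesCol n * (onesCol n)ᵀ) v w := by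
  rw [Matrix.mul_apply]
  simp only [Matrix.transpose_apply]
  have rhs : (((n:ℝ) - 2) • (1 : Matrix (Fin n) (Fin n) ℝ) + onesCol n * (onesCol n)ᵀ) v w
      = ((n:ℝ) - 2) * ind (v = w) + 1 := by
    rw [Matrix.add_apply, Matrix.smul_apply, Matrix.one_apply, ite_ind, Matrix.mul_apply]
    show _ + ∑ _k : Fin 1, (1:ℝ) * 1 = _
    rw [smul_eq_mul]
    norm_num
  rw [rhs]
  calc
    ∑ γ : Idx n, Bmat n v γ * Bmat n w γ
      = ∑ i : Fin n, ∑ j : Fin n, if i < j then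
          (fun p : Fin n × Fin n =>
            (if v = p.1 ∨ v = p.2 then (1:ℝ) else 0) *
            (if w = p.1 ∨ w = p.2 then (1:ℝ) else 0)) (i, j) else 0 := by
        exact idx_sum (fun p : Fin n × Fin n =>
            (if v = p.1 ∨ v = p.2 then (1:ℝ) else 0) *
            (if w = p.1 ∨ w = p.2 then (1:ℝ) else 0))
    _ = ∑ i : Fin n, ∑ j : Fin n,
          ind (i < j ∧ (v = i ∨ v = j) ∧ (w = i ∨ w = j)) := by
        refine Finset.sum_congr rfl fun i _ => Finset.sum_congr rfl fun j _ => ?_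
        show (if i < j then (if v = i ∨ v = j then (1:ℝ) else 0) * (if w = i ∨ w = j then (1:ℝ) else 0) else 0) = _
        by_cases hij : i < j
        · rw [if_pos hij, ite_ind, ite_ind, ind_mul]
          exact ind_congr (by tauto)
        · rw [if_neg hij, ind_false (by tauto)]
    _ = ((n:ℝ) - 2) * ind (v = w) + 1 := by
        by_cases hvw : v = w
        · subst hvw
          rw [ind_true rfl, mul_one]
          calc
            ∑ i : Fin n, ∑ j : Fin n, ind (i < j ∧ (v = i ∨ v = j) ∧ (v = i ∨ v = j))
              = ∑ i : Fin n, ∑ j : Fin n,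
                  (ind (i = v ∧ v < j) + ind (j = v ∧ i < v)) := by
                refine Finset.sum_congr rfl fun i _ => Finset.sum_congr rfl fun j _ => ?_
                rw [← ind_or (by omega)]
                exact ind_congr (by omega)
            _ = ((n:ℝ) - 2) + 1 := by
                simp only [Finset.sum_add_distrib]
                have h1 : ∀ i : Fin n, ∑ j : Fin n, ind (i = v ∧ v < j)
                    = ind (i = v) * ∑ j : Fin n, ind (v < j) := by
                  intro i; exact sum_ind_and _ _
                have h2 : ∀ i : Fin n, ∑ j : Fin n, ind (j = v ∧ i < v)
                    = ind (i < v) := by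
                  intro i; exact sum_ind_eq v _
                rw [Finset.sum_congr rfl fun i _ => h1 i,
                  Finset.sum_congr rfl fun i _ => h2 i, ← Finset.sum_mul,
                  sum_ind_single v, one_mul, cnt_Ioi' v, cnt_Iio' v]
                have hv := v.isLt
                have e1 : ((n - 1 - (v:ℕ) : ℕ) : ℝ) = (n:ℝ) - 1 - ((v:ℕ):ℝ) := by
                  rw [show (n - 1 - (v:ℕ) : ℕ) = n - (1 + (v:ℕ)) by omega,
                    Nat.cast_sub (by omega)]
                  push_cast; ring
                rw [e1]; ring
        · rw [ind_false hvw, mul_zero, zero_add]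
          calc
            ∑ i : Fin n, ∑ j : Fin n, ind (i < j ∧ (v = i ∨ v = j) ∧ (w = i ∨ w = j))
              = ∑ i : Fin n, ∑ j : Fin n,
                  (ind (i = v ∧ j = w ∧ v < w) + ind (i = w ∧ j = v ∧ w < v)) := by
                refine Finset.sum_congr rfl fun i _ => Finset.sum_congr rfl fun j _ => ?_
                rw [← ind_or (by omega)]
                exact ind_congr (by omega)
            _ = ind (v < w) + ind (w < v) := by
                simp only [Finset.sum_add_distrib]
                rw [sum2_collapse (fun i j => Iff.rfl), sum2_collapse (fun i j => Iff.rfl)]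
            _ = 1 := by
                rw [← ind_or (by omega)]
                exact ind_true (by omega)

lemma BBt_eq (hn : 3 ≤ n) :
    Bmat n * (Bmat n)ᵀ
      = ((n:ℝ) - 2) • (1 : Matrix (Fin n) (Fin n) ℝ) + onesCol n * (onesCol n)ᵀ := by
  ext v w; exact BBt_entry hn v w
end BLemmas

section Det
lemma det_key {m k : Type*} [Fintype m] [Fintype k] [DecidableEq m] [DecidableEq k]
    (s : ℝ) (hs : s ≠ 0) (M : Matrix m k ℝ) (N : Matrix k m ℝ) :
    Matrix.det (s • (1 : Matrix m m ℝ) + M * N) * s ^ (Fintype.card k)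
      = Matrix.det (s • (1 : Matrix k k ℝ) + N * M) * s ^ (Fintype.card m) := by
  have h1 : s • (1 : Matrix m m ℝ) + M * N = s • (1 + (s⁻¹ • M) * N) := by
    rw [smul_add, Matrix.smul_mul, smul_smul, mul_inv_cancel₀ hs, one_smul]
  have h2 : s • (1 : Matrix k k ℝ) + N * M = s • (1 + N * (s⁻¹ • M)) := by
    rw [smul_add, Matrix.mul_smul, smul_smul, mul_inv_cancel₀ hs, one_smul]
  rw [h1, h2, Matrix.det_smul, Matrix.det_smul,
    Matrix.det_one_add_mul_comm (s⁻¹ • M) N]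
  ring

lemma uTu_det (n : ℕ) (r : ℝ) :
    Matrix.det (r • (1 : Matrix (Fin 1) (Fin 1) ℝ) + (onesCol n)ᵀ * onesCol n)
      = r + n := by
  rw [Matrix.det_fin_one]
  rw [Matrix.add_apply, Matrix.smul_apply, Matrix.one_apply_eq, Matrix.mul_apply]
  show r • 1 + ∑ _v : Fin n, (1:ℝ) * 1 = r + n
  rw [smul_eq_mul]
  simp
end Det

section CardL
lemma L_ge (n : ℕ) (hn : 3 ≤ n) : n ≤ n * (n-1) / 2 := by
  rw [Nat.le_div_iff_mul_le (by norm_num)]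
  have : n * 2 ≤ n * (n - 1) := Nat.mul_le_mul_left n (by omega)
  omega
end CardL

end AuxStmt16

/-- The characteristic polynomial of `AᵀA` is
`(x - (3n-4))^(L-n) (x - (2n-2))^(n-1) (x - (n-2))` where `L = n(n-1)/2`; i.e. the
eigenvalues of `AᵀA` are `3n-4`, `2n-2`, `n-2` with algebraic multiplicities
`L - n = n(n-3)/2`, `n-1`, `1` (so the singular values of `A` are `√(3n-4)`,
`√(2n-2)`, `√(n-2)` with these multiplicities). -/
theorem stmt16 {n : ℕ} (hn : 3 ≤ n) :
    ((Amat n)ᵀ * Amat n).charpoly =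
      (X - C (3 * (n : ℝ) - 4)) ^ (n * (n - 1) / 2 - n) *
      (X - C (2 * (n : ℝ) - 2)) ^ (n - 1) *
      (X - C ((n : ℝ) - 2)) := by
  have hL : Fintype.card (Idx n) = n * (n-1) / 2 := card_Idx n
  have hLn : n ≤ n * (n-1) / 2 := L_ge n hn
  apply Polynomial.eq_of_infinite_eval_eq
  have hsub : ({3 * (n:ℝ) - 4, 2 * (n:ℝ) - 2} : Set ℝ)ᶜ ⊆
      {x | eval x (((Amat n)ᵀ * Amat n).charpoly) =
           eval x ((X - C (3 * (n : ℝ) - 4)) ^ (n * (n - 1) / 2 - n) *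
      (X - C (2 * (n : ℝ) - 2)) ^ (n - 1) *
      (X - C ((n : ℝ) - 2)))} := by
    intro t ht
    simp only [Set.mem_compl_iff, Set.mem_insert_iff, Set.mem_singleton_iff, not_or] at ht
    obtain ⟨ht1, ht2⟩ := ht
    show eval t (((Amat n)ᵀ * Amat n).charpoly) = _
    set s : ℝ := t - (3 * (n:ℝ) - 4) with hs_def
    set r : ℝ := t - (2 * (n:ℝ) - 2) with hr_def
    have hs : s ≠ 0 := sub_ne_zero.mpr ht1
    have hr : r ≠ 0 := sub_ne_zero.mpr ht2
    have key1 : t • (1 : Matrix (Idx n) (Idx n) ℝ) - (Amat n)ᵀ * Amat n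
        = s • 1 + (Bmat n)ᵀ * Bmat n := by
      rw [AtA_eq hn, hs_def]
      module
    have E1 := det_key s hs ((Bmat n)ᵀ) (Bmat n)
    rw [BBt_eq hn] at E1
    have key2 : s • (1 : Matrix (Fin n) (Fin n) ℝ) +
        (((n:ℝ)-2) • 1 + onesCol n * (onesCol n)ᵀ)
        = r • 1 + onesCol n * (onesCol n)ᵀ := by
      rw [← add_assoc, ← add_smul,
        show s + ((n:ℝ)-2) = r by rw [hs_def, hr_def]; ring]
    rw [key2, Fintype.card_fin, hL] at E1
    have E2 := det_key r hr (onesCol n) ((onesCol n)ᵀ)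
    rw [uTu_det n r, Fintype.card_fin, Fintype.card_fin, pow_one] at E2
    have detU : Matrix.det (r • (1 : Matrix (Fin n) (Fin n) ℝ)
        + onesCol n * (onesCol n)ᵀ) = (r + n) * r^(n-1) := by
      have hpow : (r:ℝ)^n = r^(n-1) * r := by
        rw [← pow_succ]; congr 1; omega
      rw [hpow, ← mul_assoc] at E2
      exact mul_right_cancel₀ hr E2
    have detB : Matrix.det (s • (1 : Matrix (Idx n) (Idx n) ℝ) + (Bmat n)ᵀ * Bmat n)
        = (r + n) * r^(n-1) * s^(n*(n-1)/2 - n) := by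
      rw [detU] at E1
      have hpow : s^(n*(n-1)/2) = s^(n*(n-1)/2 - n) * s^n := by
        rw [← pow_add]; congr 1; omega
      rw [hpow, ← mul_assoc] at E1
      exact mul_right_cancel₀ (pow_ne_zero n hs) E1
    rw [_root_.eval_charpoly, key1, detB]
    simp only [eval_mul, eval_pow, eval_sub, eval_X, eval_C]
    rw [show r + (n:ℝ) = t - ((n:ℝ) - 2) by rw [hr_def]; ring]
    ring
  exact Set.Infinite.mono hsub ((Set.toFinite _).infinite_compl)
end
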